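/- arXiv:math/0204179 — 7 statements merged into one kernel-verified Lean document; each statement's English description precedes it below -/
import Mathlib

section
/- Let f ∈ K[X] be a polynomial of degree d ≥ 2 with good reduction. Then for every q ∈ K, the limit as n → ∞ of (1/dⁿ)·Σ log|ξ − q|, where the sum ranges over all roots ξ ≠ q of f⁽ⁿ⁾(X) − X counted with multiplicity (f⁽ⁿ⁾ the n-th iterate of f), exists and equals log⁺|q| = max{0, log|q|}. -/
/-!
Let `a n` be the lowest nonzero coefficient of `P n = f^[n] - X` expanded at `q`. As `K` is
algebraically closed and the leading coefficient of `P n` is a unit, the sum over the roots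
`ξ ≠ q` is `log ‖a n‖`.

If `‖q‖ > 1` the orbit escapes, `‖f^[n] q‖ = ‖q‖ ^ d ^ n`, and `a n = f^[n] q - q` has this norm.
If `‖q‖ ≤ 1` we work over `𝒪 = {x | ‖x‖ ≤ 1}` with `q` translated to `0`; then `‖a n‖ ≤ 1` and
it suffices that `‖a n‖ ≥ C / n`. Now `a n` is the displacement `f^[n] 0` if `0` is not
`n`-periodic; otherwise `n = k m` for the minimal period `k`, and `a n` is `μ ^ m - 1` for the
multiplier `μ` of the cycle, which is the displacement of `1` under `z ↦ μ z`, unless `μ ^ m = 1`.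
In that case `m = w t` with `w` the order of `μ`, `f^[k w]` is tangent to the identity to some
order `ν`, and `t`-fold iteration multiplies its `X ^ ν`-coefficient by `t`, so `‖a n‖` is a
constant times `‖t‖ ≥ 1 / t`.

Nonzero displacements `y n = g^[n] x - x` of a polynomial map of `𝒪` are `≥ C / n`: either
they stay away from `0`, or two small ones, of sizes `η < ‖p‖` and `ε < η ‖p‖`, force the
derivative of every return map to the `ε`-ball to be within `‖p‖` of `1`. These return times
form `k ℕ` (ultrametric inequality), and `t ↦ y (k t)` is additive up to a relative error
below `‖p‖`, which forces `‖y (k t)‖ = ‖t‖ ‖y k‖`.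
-/

open Polynomial Filter

noncomputable def polyIter {K : Type*} [CommSemiring K] (f : K[X]) : ℕ → K[X]
  | 0 => X
  | n + 1 => f.comp (polyIter f n)

section Ultrametric

variable {R : Type*} [NormedRing R] [IsUltrametricDist R]

lemma IsUltrametricDist.norm_sub_le_max (a b : R) : ‖a - b‖ ≤ max ‖a‖ ‖b‖ := by
  simpa [sub_eq_add_neg] using norm_add_le_max a (-b)

lemma IsUltrametricDist.norm_eq_of_norm_sub_lt {a b : R} (h : ‖a - b‖ < ‖b‖) : ‖a‖ = ‖b‖ := by
  simpa [max_eq_right h.le] using IsUltrametricDist.norm_add_eq_max_of_norm_ne_norm h.ne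

lemma IsUltrametricDist.norm_eq_of_norm_sub_le_mul {a b : R} {κ μ r : ℝ} (hκμ : κ < μ)
    (hr : 0 ≤ r) (hab : ‖a - b‖ ≤ κ * r) (hb : ‖b‖ = μ * r) : ‖a‖ = ‖b‖ := by
  rcases hr.eq_or_lt with rfl | hr
  · rw [mul_zero, norm_le_zero_iff, sub_eq_zero] at hab
    rw [hab]
  · exact norm_eq_of_norm_sub_lt (hab.trans_lt (hb ▸ by gcongr))

variable [NormOneClass R] {p : ℕ}

lemma norm_natCast_eq_one_of_not_dvd (hp : p.Prime) (hpR : ‖(p : R)‖ < 1) {u : ℕ}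
    (hu : ¬p ∣ u) : ‖(u : R)‖ = 1 := by
  obtain ⟨a, b, hab⟩ : IsCoprime (p : ℤ) u :=
    Nat.isCoprime_iff_coprime.mpr ((hp.coprime_iff_not_dvd).mpr hu)
  refine le_antisymm (IsUltrametricDist.norm_natCast_le_one R u) (not_lt.mp fun hu1 => ?_)
  have hsum : (a : R) * p + b * u = 1 := by exact_mod_cast congrArg (Int.cast : ℤ → R) hab
  have hlt (z : ℤ) (m : ℕ) (hm : ‖(m : R)‖ < 1) : ‖(z : R) * m‖ < 1 :=
    (norm_mul_le _ _).trans_lt (mul_lt_one_of_nonneg_of_lt_one_right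
      (IsUltrametricDist.norm_intCast_le_one R z) (norm_nonneg _) hm)
  have := (IsUltrametricDist.norm_add_le_max _ _).trans_lt (max_lt (hlt a p hpR) (hlt b u hu1))
  simp [hsum] at this

variable [NormMulClass R]

lemma inv_le_norm_natCast (hp : p.Prime) (hpR : ‖(p : R)‖ = (p : ℝ)⁻¹) {n : ℕ} (hn : n ≠ 0) :
    (n : ℝ)⁻¹ ≤ ‖(n : R)‖ := by
  have hp1 : ‖(p : R)‖ < 1 := hpR ▸ inv_lt_one_of_one_lt₀ (by exact_mod_cast hp.one_lt)
  obtain ⟨e, u, hu, rfl⟩ := Nat.exists_eq_pow_mul_and_not_dvd hn p hp.ne_one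
  have hu0 : u ≠ 0 := by rintro rfl; simp at hn
  push_cast
  rw [norm_mul, norm_pow, hpR, norm_natCast_eq_one_of_not_dvd hp hp1 hu, mul_one, inv_pow]
  gcongr
  · exact pow_pos (by exact_mod_cast hp.pos) e
  · exact le_mul_of_one_le_right (by positivity)
      (by exact_mod_cast Nat.one_le_iff_ne_zero.mpr hu0)

theorem norm_eq_norm_natCast_mul_of_norm_add_sub_le (hp : p.Prime) (hp1 : ‖(p : R)‖ < 1)
    {κ : ℝ} (hκ : κ < ‖(p : R)‖) {W : ℕ → R}
    (hW : ∀ s t, ‖W (s + t) - W s - W t‖ ≤ κ * ‖W t‖) {t : ℕ} (ht : t ≠ 0) :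
    ‖W t‖ = ‖(t : R)‖ * ‖W 1‖ := by
  have hmul (s i : ℕ) (hi : i ≠ 0) : ‖W (i * s) - i * W s‖ ≤ κ * ‖W s‖ := by
    induction i with
    | zero => exact absurd rfl hi
    | succ i ih =>
      rcases eq_or_ne i 0 with rfl | hi
      · simpa using (norm_nonneg _).trans (hW 0 s)
      · rw [show (i + 1) * s = i * s + s by ring, Nat.cast_succ]
        calc ‖W (i * s + s) - (i + 1) * W s‖
            = ‖(W (i * s + s) - W (i * s) - W s) + (W (i * s) - i * W s)‖ := by
              congr 1; rw [add_mul, one_mul]; abel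
          _ ≤ κ * ‖W s‖ :=
            (IsUltrametricDist.norm_add_le_max _ _).trans (max_le (hW _ _) (ih hi))
  induction t using Nat.strong_induction_on with
  | _ t ih =>
    by_cases hpt : p ∣ t
    · obtain ⟨t', rfl⟩ := hpt
      have ht' : t' ≠ 0 := right_ne_zero_of_mul ht
      have hlt : t' < p * t' := lt_mul_left (Nat.pos_of_ne_zero ht') hp.one_lt
      rw [IsUltrametricDist.norm_eq_of_norm_sub_le_mul hκ (norm_nonneg _) (hmul t' p hp.ne_zero)
        (norm_mul _ _), norm_mul, ih t' hlt ht', Nat.cast_mul, norm_mul, mul_assoc]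
    · have h := hmul 1 t ht
      rw [mul_one] at h
      have hnorm := norm_natCast_eq_one_of_not_dvd hp hp1 hpt
      rw [IsUltrametricDist.norm_eq_of_norm_sub_le_mul (hκ.trans hp1) (norm_nonneg _) h
        (by rw [norm_mul, hnorm, one_mul]), norm_mul, hnorm]

end Ultrametric

section ReturnTimes

lemma Nat.exists_forall_mem_iff_dvd {S : Set ℕ} (h0 : 0 ∈ S)
    (hadd : ∀ a ∈ S, ∀ b ∈ S, a + b ∈ S) (hsub : ∀ a ∈ S, ∀ b ∈ S, b ≤ a → a - b ∈ S) :
    ∃ k, ∀ n, n ∈ S ↔ k ∣ n := by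
  classical
  by_cases hpos : ∃ n, 0 < n ∧ n ∈ S
  · obtain ⟨hk0, hkS⟩ := Nat.find_spec hpos
    have hmul (m : ℕ) : Nat.find hpos * m ∈ S := by
      induction m with
      | zero => simpa
      | succ m ih => rw [mul_add_one]; exact hadd _ ih _ hkS
    refine ⟨Nat.find hpos, fun n => ⟨fun hn => ?_, fun ⟨m, hm⟩ => hm ▸ hmul m⟩⟩
    have hmod : n % Nat.find hpos ∈ S := by
      rw [Nat.mod_eq_sub_mul_div]
      exact hsub _ hn _ (hmul _) (Nat.mul_div_le n _)
    by_contra hnd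
    exact Nat.find_min hpos (Nat.mod_lt n hk0)
      ⟨Nat.pos_of_ne_zero (mt Nat.dvd_of_mod_eq_zero hnd), hmod⟩
  · push Not at hpos
    refine ⟨0, fun n => ⟨fun hn => ?_, fun h => (zero_dvd_iff.mp h) ▸ h0⟩⟩
    exact zero_dvd_iff.mpr (Nat.eq_zero_of_not_pos fun h => hpos n h hn)

lemma LipschitzWith.exists_dist_iterate_le_iff_dvd {X : Type*} [PseudoMetricSpace X]
    [IsUltrametricDist X] {φ : X → X} (hφ : LipschitzWith 1 φ) (x : X) {ε : ℝ} (hε : 0 ≤ ε) :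
    ∃ k, ∀ n, dist (φ^[n] x) x ≤ ε ↔ k ∣ n := by
  have hφn (n : ℕ) (a b : X) : dist (φ^[n] a) (φ^[n] b) ≤ dist a b := by
    simpa using (hφ.iterate n).dist_le_mul a b
  refine Nat.exists_forall_mem_iff_dvd (S := {n | dist (φ^[n] x) x ≤ ε}) (by simpa using hε)
    (fun a ha b hb => ?_) (fun a ha b hb hba => ?_)
  · calc dist (φ^[a + b] x) x
        ≤ max (dist (φ^[a] (φ^[b] x)) (φ^[a] x)) (dist (φ^[a] x) x) := by
          rw [Function.iterate_add_apply]; exact dist_triangle_max _ _ _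
      _ ≤ ε := max_le ((hφn a _ _).trans hb) ha
  · have hab : φ^[a - b] (φ^[b] x) = φ^[a] x := by
      rw [← Function.iterate_add_apply, Nat.sub_add_cancel hba]
    calc dist (φ^[a - b] x) x
        ≤ max (dist (φ^[a - b] x) (φ^[a - b] (φ^[b] x))) (dist (φ^[a] x) x) := by
          rw [← hab]; exact dist_triangle_max _ _ _
      _ ≤ ε := max_le ((hφn _ _ _).trans (dist_comm x _ ▸ hb)) ha

end ReturnTimes

section PolyIter

variable {R : Type*}

lemma eval_polyIter [CommSemiring R] (f : R[X]) (n : ℕ) (x : R) :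
    (polyIter f n).eval x = f.eval^[n] x := by
  induction n with
  | zero => simp [polyIter]
  | succ n ih => rw [polyIter, eval_comp, ih, Function.iterate_succ_apply']

lemma polyIter_add [CommSemiring R] (f : R[X]) (a b : ℕ) :
    polyIter f (a + b) = (polyIter f a).comp (polyIter f b) := by
  induction a with
  | zero => simp [polyIter]
  | succ a ih => rw [Nat.add_right_comm, polyIter, ih, polyIter, comp_assoc]

lemma polyIter_mul [CommSemiring R] (f : R[X]) (a b : ℕ) :
    polyIter f (a * b) = polyIter (polyIter f a) b := by
  induction b with
  | zero => simp [polyIter]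
  | succ b ih => rw [mul_add_one, add_comm, polyIter_add, ih, polyIter]

lemma natDegree_polyIter [CommSemiring R] [NoZeroDivisors R] [Nontrivial R] (f : R[X])
    (n : ℕ) : (polyIter f n).natDegree = f.natDegree ^ n := by
  induction n with
  | zero => simp [polyIter]
  | succ n ih => rw [polyIter, natDegree_comp, ih, pow_succ']

lemma map_polyIter [CommSemiring R] {S : Type*} [CommSemiring S] (φ : R →+* S) (f : R[X])
    (n : ℕ) : (polyIter f n).map φ = polyIter (f.map φ) n := by
  induction n with
  | zero => simp [polyIter]
  | succ n ih => rw [polyIter, map_comp, ih, polyIter]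

lemma eval_derivative_polyIter_of_isFixedPt [CommSemiring R] {f : R[X]} {x : R}
    (hx : f.eval x = x) (n : ℕ) :
    (polyIter f n).derivative.eval x = f.derivative.eval x ^ n := by
  have hfix (n : ℕ) : (polyIter f n).eval x = x := by
    rw [eval_polyIter]; exact Function.iterate_fixed hx n
  induction n with
  | zero => simp [polyIter]
  | succ n ih => rw [polyIter, derivative_comp, eval_mul, eval_comp, hfix, ih, pow_succ]

lemma taylor_polyIter_sub_C [CommRing R] (f : R[X]) (c : R) (n : ℕ) :
    taylor c (polyIter f n) - C c = polyIter (taylor c f - C c) n := by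
  induction n with
  | zero => simp [polyIter]
  | succ n ih =>
    rw [polyIter, polyIter, ← ih]
    simp only [taylor_apply, sub_comp, C_comp, comp_assoc, add_comp, X_comp, sub_add_cancel]

lemma taylor_polyIter_sub_X [CommRing R] (f : R[X]) (c : R) (n : ℕ) :
    taylor c (polyIter f n - X) = polyIter (taylor c f - C c) n - X := by
  rw [map_sub, taylor_X, ← taylor_polyIter_sub_C]
  ring

end PolyIter

section TrailingCoeff

variable {R : Type*}

lemma trailingCoeff_eq_coeff_of_forall_lt [Semiring R] {P : R[X]} {ν : ℕ}
    (hlt : ∀ i < ν, P.coeff i = 0) (hν : P.coeff ν ≠ 0) : P.trailingCoeff = P.coeff ν := by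
  rw [trailingCoeff, le_antisymm (natTrailingDegree_le_of_ne_zero hν)
    (le_natTrailingDegree (fun h => hν (by simp [h])) hlt)]

lemma trailingCoeff_X_pow_mul [Semiring R] {E : R[X]} (hE : E.eval 0 ≠ 0) (ν : ℕ) :
    (X ^ ν * E).trailingCoeff = E.eval 0 := by
  have hcoeff : (X ^ ν * E).coeff ν = E.eval 0 := by
    simpa [coeff_zero_eq_eval_zero] using coeff_X_pow_mul' E ν ν
  rw [trailingCoeff_eq_coeff_of_forall_lt (fun i hi => ?_) (hcoeff ▸ hE), hcoeff]
  simp [coeff_X_pow_mul', hi.not_ge]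

lemma trailingCoeff_map_of_injective [Semiring R] {S : Type*} [Semiring S] {φ : R →+* S}
    (hφ : Function.Injective φ) (P : R[X]) : (P.map φ).trailingCoeff = φ P.trailingCoeff := by
  simp [trailingCoeff, natTrailingDegree, trailingDegree, support_map_of_injective _ hφ]

lemma coeff_one_eq_eval_derivative [CommSemiring R] (P : R[X]) :
    P.coeff 1 = P.derivative.eval 0 := by
  simpa using taylor_coeff_one (r := (0 : R)) (f := P)

lemma exists_eq_X_add_X_pow_mul [CommRing R] {H : R[X]} (hH : H ≠ X) (h0 : H.eval 0 = 0)
    (h1 : H.derivative.eval 0 = 1) :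
    ∃ ν E, 2 ≤ ν ∧ H = X + X ^ ν * E ∧ E.eval 0 ≠ 0 := by
  have hP : H - X ≠ 0 := sub_ne_zero.mpr hH
  obtain ⟨E, hE, hEX⟩ := exists_eq_pow_rootMultiplicity_mul_and_not_dvd (H - X) hP 0
  simp only [map_zero, sub_zero] at hE hEX
  have hX2 : X ^ 2 ∣ H - X := X_pow_dvd_iff.mpr fun i hi => by
    obtain rfl | rfl : i = 0 ∨ i = 1 := by omega
    · simp [coeff_zero_eq_eval_zero, h0]
    · simp [coeff_one_eq_eval_derivative, h1]
  refine ⟨rootMultiplicity 0 (H - X), E, ?_, by rw [← hE, add_sub_cancel], ?_⟩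
  · rw [le_rootMultiplicity_iff hP]
    simpa using hX2
  · rwa [X_dvd_iff, coeff_zero_eq_eval_zero] at hEX

lemma exists_comp_X_add_X_pow_mul [CommRing R] {ν : ℕ} (hν : 2 ≤ ν) (E F : R[X]) :
    ∃ E' : R[X], (X + X ^ ν * E).comp (X + X ^ ν * F) = X + X ^ ν * E' ∧
      E'.eval 0 = E.eval 0 + F.eval 0 := by
  obtain ⟨μ, rfl⟩ : ∃ μ, ν = μ + 2 := ⟨ν - 2, by omega⟩
  refine ⟨F + (1 + X ^ (μ + 1) * F) ^ (μ + 2) * E.comp (X + X ^ (μ + 2) * F), ?_,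
    by simp [add_comm]⟩
  have hpow : (X + X ^ (μ + 2) * F : R[X]) ^ (μ + 2) =
      X ^ (μ + 2) * (1 + X ^ (μ + 1) * F) ^ (μ + 2) := by
    rw [← mul_pow]; ring
  rw [add_comp, X_comp, mul_comp, X_pow_comp, hpow]
  ring

lemma exists_polyIter_eq_X_add_X_pow_mul [CommRing R] {ν : ℕ} (hν : 2 ≤ ν) (E : R[X])
    (t : ℕ) :
    ∃ E' : R[X], polyIter (X + X ^ ν * E) t = X + X ^ ν * E' ∧ E'.eval 0 = t * E.eval 0 := by
  induction t with
  | zero => exact ⟨0, by simp [polyIter], by simp⟩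
  | succ t ih =>
    obtain ⟨E', hE', hE'0⟩ := ih
    obtain ⟨E'', h, h0⟩ := exists_comp_X_add_X_pow_mul hν E E'
    exact ⟨E'', by rw [polyIter, hE', h], by rw [h0, hE'0]; push_cast; ring⟩

end TrailingCoeff

noncomputable abbrev integers (K : Type*) [NormedField K] [IsUltrametricDist K] : Subring K :=
  (NormedField.valuation (K := K)).integer

section Integers

variable {K : Type*} [NormedField K] [IsUltrametricDist K]

local notation "𝒪" => integers K

lemma mem_integers_iff {x : K} : x ∈ 𝒪 ↔ ‖x‖ ≤ 1 := by
  rw [Valuation.mem_integer_iff]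
  exact NNReal.coe_le_one

lemma norm_integer_le_one (x : 𝒪) : ‖x‖ ≤ 1 :=
  mem_integers_iff.mp x.2

lemma norm_natCast_integer (n : ℕ) : ‖(n : 𝒪)‖ = ‖(n : K)‖ :=
  rfl

lemma norm_eval_sub_eval_le (g : 𝒪[X]) (a b : 𝒪) : ‖g.eval a - g.eval b‖ ≤ ‖a - b‖ := by
  obtain ⟨c, hc⟩ := sub_dvd_eval_sub a b g
  rw [hc, norm_mul]
  exact mul_le_of_le_one_right (norm_nonneg _) (norm_integer_le_one c)

lemma lipschitzWith_eval (g : 𝒪[X]) : LipschitzWith 1 g.eval :=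
  LipschitzWith.of_dist_le_mul fun a b => by
    simpa [dist_eq_norm] using norm_eval_sub_eval_le g a b

lemma norm_eval_sub_eval_sub_derivative_mul_le (g : 𝒪[X]) (x z : 𝒪) :
    ‖g.eval z - g.eval x - g.derivative.eval x * (z - x)‖ ≤ ‖z - x‖ ^ 2 := by
  obtain ⟨k, hk⟩ := binomExpansion g x (z - x)
  rw [add_sub_cancel] at hk
  rw [hk, show ∀ a b c : 𝒪, a + b + c - a - b = c by intros; ring, norm_mul, norm_pow]
  exact mul_le_of_le_one_left (by positivity) (norm_integer_le_one k)

lemma norm_derivative_sub_one_mul_le (g : 𝒪[X]) (x z : 𝒪) :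
    ‖(g.derivative.eval x - 1) * (z - x)‖ ≤
      max (‖z - x‖ ^ 2) (max ‖g.eval z - z‖ ‖g.eval x - x‖) := by
  rw [show (g.derivative.eval x - 1) * (z - x) =
      -(g.eval z - g.eval x - g.derivative.eval x * (z - x)) + ((g.eval z - z) - (g.eval x - x))
      by ring]
  refine (IsUltrametricDist.norm_add_le_max _ _).trans (max_le_max ?_ ?_)
  · rw [norm_neg]; exact norm_eval_sub_eval_sub_derivative_mul_le g x z
  · exact IsUltrametricDist.norm_sub_le_max _ _

lemma norm_derivative_polyIter_sub_one_mul_le (g : 𝒪[X]) (x : 𝒪) {s : ℕ} {ε : ℝ}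
    (hs : ‖g.eval^[s] x - x‖ ≤ ε) (n : ℕ) :
    ‖(polyIter g s).derivative.eval x - 1‖ * ‖g.eval^[n] x - x‖ ≤
      max (‖g.eval^[n] x - x‖ ^ 2) ε := by
  have hmove : ‖(polyIter g s).eval (g.eval^[n] x) - g.eval^[n] x‖ ≤ ε :=
    calc ‖(polyIter g s).eval (g.eval^[n] x) - g.eval^[n] x‖
        = ‖(polyIter g n).eval (g.eval^[s] x) - (polyIter g n).eval x‖ := by
          simp only [eval_polyIter, ← Function.iterate_add_apply, add_comm]
      _ ≤ ε := (norm_eval_sub_eval_le _ _ _).trans hs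
  rw [← norm_mul]
  refine (norm_derivative_sub_one_mul_le _ x _).trans (max_le_max le_rfl (max_le hmove ?_))
  rwa [eval_polyIter]

lemma norm_iterate_add_sub_le (g : 𝒪[X]) (x : 𝒪) (s t : ℕ) :
    ‖(g.eval^[s + t] x - x) - (g.eval^[s] x - x) - (g.eval^[t] x - x)‖ ≤
      max (‖g.eval^[t] x - x‖ ^ 2)
        (‖(polyIter g s).derivative.eval x - 1‖ * ‖g.eval^[t] x - x‖) := by
  set G := polyIter g s
  set z := g.eval^[t] x
  calc ‖(g.eval^[s + t] x - x) - (g.eval^[s] x - x) - (z - x)‖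
      = ‖(G.eval z - G.eval x - G.derivative.eval x * (z - x)) +
          (G.derivative.eval x - 1) * (z - x)‖ := by
        rw [Function.iterate_add_apply, eval_polyIter, eval_polyIter]
        congr 1; ring
    _ ≤ _ := (IsUltrametricDist.norm_add_le_max _ _).trans
        (max_le_max (norm_eval_sub_eval_sub_derivative_mul_le G x z) (norm_mul _ _).le)

lemma norm_iterate_mul_add_sub_le (g : 𝒪[X]) (x : 𝒪) {k n₁ : ℕ} {ε : ℝ}
    (hk : ∀ n, ‖g.eval^[n] x - x‖ ≤ ε ↔ k ∣ n) (hη : 0 < ‖g.eval^[n₁] x - x‖) (s t : ℕ) :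
    ‖(g.eval^[k * (s + t)] x - x) - (g.eval^[k * s] x - x) - (g.eval^[k * t] x - x)‖ ≤
      max ε (max ‖g.eval^[n₁] x - x‖ (ε / ‖g.eval^[n₁] x - x‖)) * ‖g.eval^[k * t] x - x‖ := by
  set η := ‖g.eval^[n₁] x - x‖
  have hderiv : ‖(polyIter g (k * s)).derivative.eval x - 1‖ ≤ max η (ε / η) := by
    have h : ‖(polyIter g (k * s)).derivative.eval x - 1‖ * η ≤ max (η ^ 2) ε :=
      norm_derivative_polyIter_sub_one_mul_le g x ((hk _).mpr (dvd_mul_right k s)) n₁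
    rwa [← le_div_iff₀ hη, ← max_div_div_right hη.le, sq, mul_div_cancel_right₀ _ hη.ne'] at h
  have ht : ‖g.eval^[k * t] x - x‖ ≤ ε := (hk _).mpr (dvd_mul_right k t)
  refine (mul_add k s t ▸ norm_iterate_add_sub_le g x (k * s) (k * t)).trans (max_le ?_ ?_)
  · rw [sq]
    exact mul_le_mul_of_nonneg_right (ht.trans (le_max_left _ _)) (norm_nonneg _)
  · exact mul_le_mul_of_nonneg_right (hderiv.trans (le_max_right _ _)) (norm_nonneg _)

variable {p : ℕ}

theorem exists_div_le_norm_iterate_sub_of_lt (hp : p.Prime) (hpK : ‖(p : K)‖ = (p : ℝ)⁻¹)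
    (g : 𝒪[X]) (x : 𝒪) {n₁ n₂ : ℕ} (hn₂ : g.eval^[n₂] x ≠ x)
    (hη : ‖g.eval^[n₁] x - x‖ < ‖(p : K)‖)
    (hε : ‖g.eval^[n₂] x - x‖ < ‖g.eval^[n₁] x - x‖ * ‖(p : K)‖) :
    ∃ C > 0, ∀ n, g.eval^[n] x ≠ x → C / n ≤ ‖g.eval^[n] x - x‖ := by
  set η := ‖g.eval^[n₁] x - x‖
  set ε := ‖g.eval^[n₂] x - x‖
  have hp1 : ‖(p : K)‖ < 1 := hpK ▸ inv_lt_one_of_one_lt₀ (by exact_mod_cast hp.one_lt)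
  have hε0 : 0 < ε := norm_pos_iff.mpr (sub_ne_zero.mpr hn₂)
  have hη0 : 0 < η := pos_of_mul_pos_left (hε0.trans hε) (norm_nonneg _)
  obtain ⟨k, hk⟩ := (lipschitzWith_eval g).exists_dist_iterate_le_iff_dvd x hε0.le
  simp only [dist_eq_norm] at hk
  have hκ : max ε (max η (ε / η)) < ‖(p : K)‖ := by
    refine max_lt ?_ (max_lt hη ((div_lt_iff₀ hη0).mpr (by linarith)))
    nlinarith [norm_nonneg (p : K)]
  set W : ℕ → 𝒪 := fun t => g.eval^[k * t] x - x
  have hgrowth {t : ℕ} (ht : t ≠ 0) : ‖W t‖ = ‖(t : 𝒪)‖ * ‖W 1‖ :=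
    norm_eq_norm_natCast_mul_of_norm_add_sub_le hp (by rwa [norm_natCast_integer])
      (by rwa [norm_natCast_integer]) (norm_iterate_mul_add_sub_le g x hk hη0) ht
  obtain ⟨t₂, rfl⟩ := (hk n₂).mp le_rfl
  have hW1 : 0 < ‖W 1‖ := by
    have h := hgrowth (t := t₂) (by rintro rfl; exact hn₂ rfl)
    by_contra h1
    rw [le_antisymm (not_lt.mp h1) (norm_nonneg _), mul_zero] at h
    exact hε0.ne' h
  refine ⟨min ε ‖W 1‖, lt_min hε0 hW1, fun n hn => ?_⟩
  have hn0 : n ≠ 0 := by rintro rfl; exact hn rfl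
  by_cases hkn : k ∣ n
  · obtain ⟨t, rfl⟩ := hkn
    have ht : t ≠ 0 := right_ne_zero_of_mul hn0
    have hkt : t ≤ k * t := Nat.le_mul_of_pos_left t (Nat.pos_of_ne_zero (left_ne_zero_of_mul hn0))
    calc min ε ‖W 1‖ / ((k * t : ℕ) : ℝ) ≤ ‖W 1‖ / t :=
          div_le_div₀ (norm_nonneg _) (min_le_right _ _) (by positivity) (by exact_mod_cast hkt)
      _ = (t : ℝ)⁻¹ * ‖W 1‖ := by ring
      _ ≤ ‖(t : 𝒪)‖ * ‖W 1‖ := by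
          gcongr; rw [norm_natCast_integer]; exact inv_le_norm_natCast hp hpK ht
      _ = ‖W t‖ := (hgrowth ht).symm
  · have hn1 : (1 : ℝ) ≤ n := by exact_mod_cast Nat.one_le_iff_ne_zero.mpr hn0
    exact (div_le_self (lt_min hε0 hW1).le hn1).trans
      ((min_le_left _ _).trans (not_le.mp (mt (hk n).mp hkn)).le)

theorem exists_div_le_norm_iterate_sub (hp : p.Prime) (hpK : ‖(p : K)‖ = (p : ℝ)⁻¹)
    (g : 𝒪[X]) (x : 𝒪) :
    ∃ C > 0, ∀ n, g.eval^[n] x ≠ x → C / n ≤ ‖g.eval^[n] x - x‖ := by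
  by_cases hsep : ∃ c > 0, ∀ n, g.eval^[n] x ≠ x → c ≤ ‖g.eval^[n] x - x‖
  · obtain ⟨c, hc, h⟩ := hsep
    refine ⟨c, hc, fun n hn => (div_le_self hc.le ?_).trans (h n hn)⟩
    exact_mod_cast Nat.one_le_iff_ne_zero.mpr (by rintro rfl; exact hn rfl)
  push Not at hsep
  have hp0 : 0 < ‖(p : K)‖ := by rw [hpK]; exact inv_pos.mpr (by exact_mod_cast hp.pos)
  obtain ⟨n₁, hn₁, hη⟩ := hsep _ hp0
  have hη0 : 0 < ‖g.eval^[n₁] x - x‖ := norm_pos_iff.mpr (sub_ne_zero.mpr hn₁)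
  obtain ⟨n₂, hn₂, hε⟩ := hsep _ (mul_pos hη0 hp0)
  exact exists_div_le_norm_iterate_sub_of_lt hp hpK g x hn₂ hη hε

lemma two_le_natDegree_polyIter {g : 𝒪[X]} (hg : 2 ≤ g.natDegree) {n : ℕ} (hn : n ≠ 0) :
    2 ≤ (polyIter g n).natDegree := by
  rw [natDegree_polyIter]
  exact hg.trans (Nat.le_self_pow hn _)

theorem exists_div_le_norm_trailingCoeff_of_pow_eq_one (hp : p.Prime)
    (hpK : ‖(p : K)‖ = (p : ℝ)⁻¹) {F : 𝒪[X]} (hF : 2 ≤ F.natDegree) (h0 : F.eval 0 = 0) :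
    ∃ C > 0, ∀ m : ℕ, m ≠ 0 → F.derivative.eval 0 ^ m = 1 →
      C / m ≤ ‖(polyIter F m - X).trailingCoeff‖ := by
  set μ := F.derivative.eval 0
  by_cases hfin : IsOfFinOrder μ
  swap
  · exact ⟨1, one_pos, fun m hm hμ =>
      (hfin (isOfFinOrder_iff_pow_eq_one.mpr ⟨m, Nat.pos_of_ne_zero hm, hμ⟩)).elim⟩
  set w := orderOf μ
  have hw : w ≠ 0 := hfin.orderOf_pos.ne'
  have hfix : (polyIter F w).eval 0 = 0 := by
    rw [eval_polyIter]; exact Function.iterate_fixed h0 w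
  have hH : polyIter F w ≠ X := fun h => by simpa [h] using two_le_natDegree_polyIter hF hw
  obtain ⟨ν, E, hν, hHE, hE0⟩ := exists_eq_X_add_X_pow_mul hH hfix
    (by rw [eval_derivative_polyIter_of_isFixedPt h0, pow_orderOf_eq_one])
  refine ⟨‖E.eval 0‖, norm_pos_iff.mpr hE0, fun m hm hμ => ?_⟩
  obtain ⟨t, rfl⟩ := orderOf_dvd_of_pow_eq_one hμ
  have ht : t ≠ 0 := right_ne_zero_of_mul hm
  obtain ⟨E', hE', hE'0⟩ := exists_polyIter_eq_X_add_X_pow_mul hν E t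
  have hnorm : (t : ℝ)⁻¹ * ‖E.eval 0‖ ≤ ‖E'.eval 0‖ := by
    rw [hE'0, norm_mul, norm_natCast_integer]
    gcongr
    exact inv_le_norm_natCast hp hpK ht
  have hE'ne : E'.eval 0 ≠ 0 :=
    norm_pos_iff.mp ((mul_pos (by positivity) (norm_pos_iff.mpr hE0)).trans_le hnorm)
  rw [polyIter_mul, hHE, hE', add_sub_cancel_left, trailingCoeff_X_pow_mul hE'ne]
  calc ‖E.eval 0‖ / ((w * t : ℕ) : ℝ) ≤ ‖E.eval 0‖ / t :=
        div_le_div_of_nonneg_left (norm_nonneg _) (by positivity)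
          (by exact_mod_cast Nat.le_mul_of_pos_left t (Nat.pos_of_ne_zero hw))
    _ = (t : ℝ)⁻¹ * ‖E.eval 0‖ := by ring
    _ ≤ _ := hnorm

theorem exists_div_le_norm_trailingCoeff_of_isFixedPt (hp : p.Prime)
    (hpK : ‖(p : K)‖ = (p : ℝ)⁻¹) {F : 𝒪[X]} (hF : 2 ≤ F.natDegree) (h0 : F.eval 0 = 0) :
    ∃ C > 0, ∀ m : ℕ, m ≠ 0 → C / m ≤ ‖(polyIter F m - X).trailingCoeff‖ := by
  set μ := F.derivative.eval 0
  obtain ⟨C₁, hC₁, h₁⟩ := exists_div_le_norm_iterate_sub hp hpK (C μ * X) 1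
  obtain ⟨C₂, hC₂, h₂⟩ := exists_div_le_norm_trailingCoeff_of_pow_eq_one hp hpK hF h0
  have hiter (m : ℕ) : (C μ * X).eval^[m] 1 = μ ^ m := by
    induction m with
    | zero => simp
    | succ m ih =>
      rw [Function.iterate_succ_apply', ih, eval_mul, eval_C, eval_X, pow_succ, mul_comm]
  refine ⟨min C₁ C₂, lt_min hC₁ hC₂, fun m hm => ?_⟩
  by_cases hμ : μ ^ m = 1
  · exact (div_le_div_of_nonneg_right (min_le_right _ _) m.cast_nonneg).trans (h₂ m hm hμ)
  have hfix : (polyIter F m).eval 0 = 0 := by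
    rw [eval_polyIter]; exact Function.iterate_fixed h0 m
  have hcoeff1 : (polyIter F m - X).coeff 1 = μ ^ m - 1 := by
    rw [coeff_sub, coeff_X_one, coeff_one_eq_eval_derivative,
      eval_derivative_polyIter_of_isFixedPt h0]
  rw [trailingCoeff_eq_coeff_of_forall_lt (ν := 1) (fun i hi => ?_)
    (hcoeff1 ▸ sub_ne_zero.mpr hμ), hcoeff1]
  · have h := h₁ m (by rwa [hiter])
    rw [hiter] at h
    exact (div_le_div_of_nonneg_right (min_le_left _ _) m.cast_nonneg).trans h
  · obtain rfl : i = 0 := by omega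
    simp [coeff_zero_eq_eval_zero, hfix]

theorem exists_div_le_norm_trailingCoeff_polyIter_sub_X (hp : p.Prime)
    (hpK : ‖(p : K)‖ = (p : ℝ)⁻¹) {g : 𝒪[X]} (hg : 2 ≤ g.natDegree) :
    ∃ C > 0, ∀ n : ℕ, n ≠ 0 → C / n ≤ ‖(polyIter g n - X).trailingCoeff‖ := by
  obtain ⟨C₁, hC₁, h₁⟩ := exists_div_le_norm_iterate_sub hp hpK g 0
  have hmoved {n : ℕ} (hn : g.eval^[n] 0 ≠ 0) :
      C₁ / n ≤ ‖(polyIter g n - X).trailingCoeff‖ := by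
    have h : (polyIter g n - X).coeff 0 = g.eval^[n] 0 := by
      simp [coeff_zero_eq_eval_zero, eval_polyIter]
    rw [trailingCoeff_eq_coeff_zero (h ▸ hn), h]
    simpa using h₁ n hn
  by_cases hper : (0 : 𝒪) ∈ Function.periodicPts g.eval
  swap
  · exact ⟨C₁, hC₁, fun n hn => hmoved fun h => hper ⟨n, Nat.pos_of_ne_zero hn, h⟩⟩
  set k := Function.minimalPeriod g.eval 0
  have hk : k ≠ 0 := (Function.minimalPeriod_pos_of_mem_periodicPts hper).ne'
  obtain ⟨C₂, hC₂, h₂⟩ := exists_div_le_norm_trailingCoeff_of_isFixedPt hp hpK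
    (two_le_natDegree_polyIter hg hk) (by rw [eval_polyIter]; exact Function.iterate_minimalPeriod)
  refine ⟨min C₁ C₂, lt_min hC₁ hC₂, fun n hn => ?_⟩
  by_cases hmove : g.eval^[n] 0 = 0
  · obtain ⟨m, rfl⟩ := Function.isPeriodicPt_iff_minimalPeriod_dvd.mp hmove
    have hm : m ≠ 0 := right_ne_zero_of_mul hn
    rw [polyIter_mul]
    calc min C₁ C₂ / ((k * m : ℕ) : ℝ) ≤ C₂ / m :=
          div_le_div₀ hC₂.le (min_le_right _ _) (by positivity)
            (by exact_mod_cast Nat.le_mul_of_pos_left m (Nat.pos_of_ne_zero hk))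
      _ ≤ _ := h₂ m hm
  · exact (div_le_div_of_nonneg_right (min_le_left _ _) n.cast_nonneg).trans (hmoved hmove)

theorem exists_div_le_norm_trailingCoeff_taylor (hp : p.Prime) (hpK : ‖(p : K)‖ = (p : ℝ)⁻¹)
    {f : K[X]} (hf : ∀ i, ‖f.coeff i‖ ≤ 1) (hdeg : 2 ≤ f.natDegree) {q : K} (hq : ‖q‖ ≤ 1) :
    ∃ C > 0, ∀ n : ℕ, n ≠ 0 → C / n ≤ ‖(taylor q (polyIter f n - X)).trailingCoeff‖ ∧
      ‖(taylor q (polyIter f n - X)).trailingCoeff‖ ≤ 1 := by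
  have hlift : f ∈ lifts (𝒪).subtype :=
    (lifts_iff_coeff_lifts f).mpr fun i => ⟨⟨_, mem_integers_iff.mpr (hf i)⟩, rfl⟩
  obtain ⟨f₀, rfl⟩ := (mem_lifts f).mp hlift
  set q₀ : 𝒪 := ⟨q, mem_integers_iff.mpr hq⟩
  set g := taylor q₀ f₀ - C q₀
  have hinj : Function.Injective (𝒪).subtype := Subtype.val_injective
  have hg : 2 ≤ g.natDegree := by
    rwa [natDegree_sub_C, natDegree_taylor, ← natDegree_map_eq_of_injective hinj]
  obtain ⟨C, hC, hbound⟩ := exists_div_le_norm_trailingCoeff_polyIter_sub_X hp hpK hg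
  refine ⟨C, hC, fun n hn => ?_⟩
  have hmap : taylor q (polyIter (f₀.map (𝒪).subtype) n - X) =
      (polyIter g n - X).map (𝒪).subtype := by
    rw [taylor_polyIter_sub_X, Polynomial.map_sub, map_X, map_polyIter, Polynomial.map_sub,
      map_taylor, map_C]
    rfl
  rw [hmap, trailingCoeff_map_of_injective hinj]
  exact ⟨hbound n hn, norm_integer_le_one _⟩

end Integers

section LeadingCoeff

variable {K : Type*} [NormedField K] {f : K[X]}

lemma norm_leadingCoeff_polyIter (hlead : ‖f.leadingCoeff‖ = 1) (hdeg : f.natDegree ≠ 0)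
    (n : ℕ) : ‖(polyIter f n).leadingCoeff‖ = 1 := by
  induction n with
  | zero => simp [polyIter]
  | succ n ih =>
    rw [polyIter, leadingCoeff_comp (by rw [natDegree_polyIter]; exact pow_ne_zero n hdeg),
      norm_mul, norm_pow, hlead, ih, one_pow, one_mul]

lemma norm_leadingCoeff_polyIter_sub_X (hlead : ‖f.leadingCoeff‖ = 1) (hdeg : 2 ≤ f.natDegree)
    {n : ℕ} (hn : n ≠ 0) : ‖(polyIter f n - X).leadingCoeff‖ = 1 := by
  have hlt : (X : K[X]).degree < (polyIter f n).degree := by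
    rw [degree_X, degree_eq_natDegree, natDegree_polyIter]
    · exact_mod_cast Nat.one_lt_pow hn (by omega)
    · exact fun h => by simpa [h] using norm_leadingCoeff_polyIter hlead (by omega) n
  rw [leadingCoeff_sub_of_degree_lt hlt, norm_leadingCoeff_polyIter hlead (by omega)]

end LeadingCoeff

section Growth

variable {K : Type*} [NormedField K] [IsUltrametricDist K] {f : K[X]}

lemma norm_eval_of_one_lt_norm (hf : ∀ i, ‖f.coeff i‖ ≤ 1) (hlead : ‖f.leadingCoeff‖ = 1)
    (hdeg : f.natDegree ≠ 0) {x : K} (hx : 1 < ‖x‖) : ‖f.eval x‖ = ‖x‖ ^ f.natDegree := by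
  set d := f.natDegree
  have hsplit : f.eval x = (∑ i ∈ Finset.range d, f.coeff i * x ^ i) + f.leadingCoeff * x ^ d := by
    rw [eval_eq_sum_range, Finset.sum_range_succ]; rfl
  have hlow : ‖∑ i ∈ Finset.range d, f.coeff i * x ^ i‖ < ‖f.leadingCoeff * x ^ d‖ := by
    rw [norm_mul, hlead, one_mul, norm_pow]
    refine (IsUltrametricDist.norm_sum_le_of_forall_le_of_nonneg (by positivity)
      fun i hi => ?_).trans_lt (pow_lt_pow_right₀ hx (Nat.sub_lt (Nat.pos_of_ne_zero hdeg) one_pos))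
    rw [norm_mul, norm_pow]
    exact (mul_le_of_le_one_left (by positivity) (hf i)).trans
      (pow_le_pow_right₀ hx.le (by have := Finset.mem_range.mp hi; omega))
  rw [hsplit, IsUltrametricDist.norm_eq_of_norm_sub_lt (by rwa [add_sub_cancel_right]), norm_mul,
    hlead, one_mul, norm_pow]

lemma norm_iterate_eval_of_one_lt_norm (hf : ∀ i, ‖f.coeff i‖ ≤ 1)
    (hlead : ‖f.leadingCoeff‖ = 1) (hdeg : f.natDegree ≠ 0) {x : K} (hx : 1 < ‖x‖) (n : ℕ) :
    ‖f.eval^[n] x‖ = ‖x‖ ^ f.natDegree ^ n := by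
  induction n with
  | zero => simp
  | succ n ih =>
    rw [Function.iterate_succ_apply', norm_eval_of_one_lt_norm hf hlead hdeg
      (ih ▸ one_lt_pow₀ hx (pow_ne_zero n hdeg)), ih, ← pow_mul, pow_succ]

lemma norm_trailingCoeff_taylor_of_one_lt_norm (hf : ∀ i, ‖f.coeff i‖ ≤ 1)
    (hlead : ‖f.leadingCoeff‖ = 1) (hdeg : 2 ≤ f.natDegree) {q : K} (hq : 1 < ‖q‖) {n : ℕ}
    (hn : n ≠ 0) :
    ‖(taylor q (polyIter f n - X)).trailingCoeff‖ = ‖q‖ ^ f.natDegree ^ n := by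
  have hiter := norm_iterate_eval_of_one_lt_norm hf hlead (by omega) hq n
  have hlt : ‖q‖ < ‖f.eval^[n] q‖ := hiter ▸ lt_self_pow₀ hq (Nat.one_lt_pow hn (by omega))
  have heval : ‖f.eval^[n] q - q‖ = ‖q‖ ^ f.natDegree ^ n := by
    rw [IsUltrametricDist.norm_eq_of_norm_sub_lt (by rwa [sub_sub_cancel_left, norm_neg]), hiter]
  have hcoeff0 : (taylor q (polyIter f n - X)).coeff 0 = f.eval^[n] q - q := by
    rw [taylor_coeff_zero, eval_sub, eval_X, eval_polyIter]
  have hne : f.eval^[n] q - q ≠ 0 :=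
    norm_ne_zero_iff.mp (heval ▸ (pow_pos (one_pos.trans hq) _).ne')
  rw [trailingCoeff_eq_coeff_zero (hcoeff0 ▸ hne), hcoeff0, heval]

end Growth

theorem sum_log_norm_sub_roots_eq {K : Type*} [NormedField K] [IsAlgClosed K] [DecidableEq K]
    {P : K[X]} (hP : P ≠ 0) (q : K) :
    ((P.roots.filter (fun ξ => ξ ≠ q)).map (fun ξ => Real.log ‖ξ - q‖)).sum =
      Real.log ‖(taylor q P).trailingCoeff‖ - Real.log ‖P.leadingCoeff‖ := by
  obtain ⟨g, hPg, hgq⟩ := exists_eq_pow_rootMultiplicity_mul_and_not_dvd P hP q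
  have hg0 : g.eval q ≠ 0 := fun h => hgq (dvd_iff_isRoot.mpr h)
  have hroots : P.roots.filter (fun ξ => ξ ≠ q) = g.roots := by
    rw [hPg, roots_mul (hPg ▸ hP), roots_pow, roots_X_sub_C, Multiset.filter_add,
      Multiset.filter_eq_nil.mpr fun ξ hξ => not_not.mpr (Multiset.mem_singleton.mp
        (Multiset.mem_of_mem_nsmul hξ)),
      Multiset.filter_eq_self.mpr fun ξ hξ => by rintro rfl; exact hg0 (mem_roots'.mp hξ).2,
      zero_add]
  have htrail : (taylor q P).trailingCoeff = g.eval q := by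
    rw [hPg, taylor_mul, taylor_pow, map_sub, taylor_X, taylor_C, add_sub_cancel_right,
      trailingCoeff_X_pow_mul (by simpa [taylor_eval] using hg0), taylor_eval, zero_add]
  have hlead : P.leadingCoeff = g.leadingCoeff := by
    rw [hPg, leadingCoeff_mul, leadingCoeff_pow, leadingCoeff_X_sub_C, one_pow, one_mul]
  have hlc : g.leadingCoeff ≠ 0 := leadingCoeff_ne_zero.mpr fun h => by simp [h] at hg0
  have hne : ∀ x ∈ g.roots.map fun ξ => ‖q - ξ‖, x ≠ 0 := by
    simp only [Multiset.mem_map]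
    rintro _ ⟨ξ, hξ, rfl⟩
    exact norm_ne_zero_iff.mpr (sub_ne_zero.mpr fun h => hg0 (h ▸ (mem_roots'.mp hξ).2))
  have hprod : ‖(g.roots.map (q - ·)).prod‖ = (g.roots.map fun ξ => ‖q - ξ‖).prod := by
    rw [← normHom_apply, map_multiset_prod, Multiset.map_map]
    rfl
  rw [hroots, htrail, hlead, (IsAlgClosed.splits g).eval_eq_prod_roots, norm_mul, hprod,
    Real.log_mul (norm_ne_zero_iff.mpr hlc) (Multiset.prod_ne_zero fun h => hne 0 h rfl),
    add_sub_cancel_left, Real.log_multiset_prod hne, Multiset.map_map]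
  simp_rw [Function.comp_def, norm_sub_rev]

lemma tendsto_one_div_pow_mul_log {d : ℝ} (hd : 1 < d) {C : ℝ} (hC : 0 < C) {a : ℕ → ℝ}
    (ha : ∀ᶠ n in atTop, C / n ≤ a n ∧ a n ≤ 1) :
    Tendsto (fun n => 1 / d ^ n * Real.log (a n)) atTop (nhds 0) := by
  have hpow : Tendsto (fun n : ℕ => 1 / d ^ n) atTop (nhds 0) := by
    simp only [one_div]
    exact tendsto_inv_atTop_zero.comp (tendsto_pow_atTop_atTop_of_one_lt hd)
  have hlin : Tendsto (fun n : ℕ => (n : ℝ) / d ^ n) atTop (nhds 0) := by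
    simpa using tendsto_pow_const_div_const_pow_of_one_lt 1 hd
  have hlow := (hpow.mul_const (Real.log C)).sub hlin
  rw [zero_mul, sub_zero] at hlow
  refine tendsto_of_tendsto_of_tendsto_of_le_of_le' hlow tendsto_const_nhds ?_ ?_
  · filter_upwards [ha, eventually_ne_atTop 0] with n han hn
    have hn1 : (1 : ℝ) ≤ n := by exact_mod_cast Nat.one_le_iff_ne_zero.mpr hn
    have hlog : Real.log C - n ≤ Real.log (a n) := by
      calc Real.log C - n ≤ Real.log C - Real.log n := by
            linarith [Real.log_le_sub_one_of_pos (zero_lt_one.trans_le hn1)]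
        _ = Real.log (C / n) := (Real.log_div hC.ne' (by positivity)).symm
        _ ≤ Real.log (a n) := Real.log_le_log (by positivity) han.1
    calc 1 / d ^ n * Real.log C - n / d ^ n = 1 / d ^ n * (Real.log C - n) := by ring
      _ ≤ 1 / d ^ n * Real.log (a n) := by gcongr
  · filter_upwards [ha, eventually_ne_atTop 0] with n han hn
    exact mul_nonpos_of_nonneg_of_nonpos (by positivity)
      (Real.log_nonpos ((div_pos hC (by positivity)).le.trans han.1) han.2)

theorem stmt0_general {K : Type*} [NormedField K] [IsUltrametricDist K]
    [IsAlgClosed K] [DecidableEq K]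
    (p : ℕ) (hp : p.Prime) (hpK : ‖(p : K)‖ = (p : ℝ)⁻¹)
    (f : K[X]) (d : ℕ) (hd : 2 ≤ d) (hdeg : f.natDegree = d)
    (hcoeff : ∀ i, ‖f.coeff i‖ ≤ 1) (hlead : ‖f.leadingCoeff‖ = 1)
    (q : K) :
    Tendsto (fun n : ℕ =>
        (1 / (d : ℝ) ^ n) *
          (((polyIter f n - X).roots.filter (fun ξ => ξ ≠ q)).map
            (fun ξ => Real.log ‖ξ - q‖)).sum)
      atTop (nhds (max 0 (Real.log ‖q‖))) := by
  subst hdeg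
  have hsum : ∀ᶠ n in atTop, (((polyIter f n - X).roots.filter (fun ξ => ξ ≠ q)).map
      (fun ξ => Real.log ‖ξ - q‖)).sum =
        Real.log ‖(taylor q (polyIter f n - X)).trailingCoeff‖ := by
    filter_upwards [eventually_ne_atTop 0] with n hn
    have hlc := norm_leadingCoeff_polyIter_sub_X hlead hd hn
    rw [sum_log_norm_sub_roots_eq (fun h => by simp [h] at hlc) q, hlc, Real.log_one, sub_zero]
  rcases le_or_gt ‖q‖ 1 with hq | hq
  · rw [max_eq_left (Real.log_nonpos (norm_nonneg q) hq)]
    obtain ⟨C, hC, hbound⟩ := exists_div_le_norm_trailingCoeff_taylor hp hpK hcoeff hd hq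
    refine (tendsto_one_div_pow_mul_log (d := f.natDegree) (by exact_mod_cast hd) hC
      (a := fun n => ‖(taylor q (polyIter f n - X)).trailingCoeff‖) ?_).congr' ?_
    · filter_upwards [eventually_ne_atTop 0] with n hn using hbound n hn
    · filter_upwards [hsum] with n hn
      rw [hn]
  · rw [max_eq_right (Real.log_nonneg hq.le)]
    refine tendsto_const_nhds.congr' ?_
    filter_upwards [hsum, eventually_ne_atTop 0] with n hn hn0
    rw [hn, norm_trailingCoeff_taylor_of_one_lt_norm hcoeff hlead hd hq hn0, Real.log_pow]
    push_cast
    field_simp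

/-- for a polynomial `f` of degree `d ≥ 2` with good reduction over an
algebraically closed complete nonarchimedean field extending `ℚ_p`, the averaged sum of
`log‖ξ - q‖` over the roots `ξ ≠ q` of `f⁽ⁿ⁾ - X` (with multiplicity) converges to
`log⁺‖q‖`. -/
theorem stmt0 {K : Type*} [NormedField K] [IsUltrametricDist K] [CompleteSpace K]
    [IsAlgClosed K] [CharZero K] [DecidableEq K]
    (p : ℕ) (hp : p.Prime) (hpK : ‖(p : K)‖ = (p : ℝ)⁻¹)
    (f : K[X]) (d : ℕ) (hd : 2 ≤ d) (hdeg : f.natDegree = d)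
    (hcoeff : ∀ i, ‖f.coeff i‖ ≤ 1) (hlead : ‖f.leadingCoeff‖ = 1)
    (q : K) :
    Tendsto (fun n : ℕ =>
        (1 / (d : ℝ) ^ n) *
          (((polyIter f n - X).roots.filter (fun ξ => ξ ≠ q)).map
            (fun ξ => Real.log ‖ξ - q‖)).sum)
      atTop (nhds (max 0 (Real.log ‖q‖))) :=
  stmt0_general p hp hpK f d hd hdeg hcoeff hlead q
end

section
/- Let f ∈ K[X] be a polynomial of degree d ≥ 2 with good reduction such that f(0) = 0 and |f′(0)| < 1, and let n > 1. Then the product over all nonzero periodic points ξ of f of |ξ| raised to the power aₙ*(ξ) equals 1. -/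
open Polynomial

/-- `aₙ(ξ)`: the multiplicity of `ξ` as a root of `f⁽ⁿ⁾(X) - X`. -/
noncomputable def aMult {K : Type*} [Field K] (f : K[X]) (n : ℕ) (ξ : K) : ℕ :=
  rootMultiplicity ξ (polyIter f n - X)

/-- `aₙ*(ξ) = Σ_{k ∣ n} μ(n/k)·a_k(ξ)`. -/
noncomputable def aStar {K : Type*} [Field K] (f : K[X]) (n : ℕ) (ξ : K) : ℤ :=
  ∑ k ∈ n.divisors, (ArithmeticFunction.moebius (n / k)) * (aMult f k ξ : ℤ)

section Aux

variable {K : Type*} [NormedField K] [IsUltrametricDist K]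

/-- For a good-reduction polynomial, points of norm `> 1` strictly increase in norm. -/
lemma norm_eval_gt {f : K[X]} {d : ℕ} (hd : 2 ≤ d) (hdeg : f.natDegree = d)
    (hcoeff : ∀ i, ‖f.coeff i‖ ≤ 1) (hlead : ‖f.leadingCoeff‖ = 1)
    {x : K} (hx : 1 < ‖x‖) : ‖x‖ < ‖f.eval x‖ := by
  have hx0 : (0:ℝ) < ‖x‖ := by linarith
  have heval := f.eval_eq_sum_range (x := x)
  rw [hdeg, Finset.sum_range_succ] at heval
  have hlead' : ‖f.coeff d * x ^ d‖ = ‖x‖ ^ d := by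
    rw [norm_mul, norm_pow, ← hdeg, Polynomial.coeff_natDegree, hdeg] at *
    rw [hlead, one_mul]
  have hrest : ‖∑ i ∈ Finset.range d, f.coeff i * x ^ i‖ ≤ ‖x‖ ^ (d - 1) := by
    apply IsUltrametricDist.norm_sum_le_of_forall_le_of_nonneg (by positivity)
    intro i hi
    rw [norm_mul, norm_pow]
    calc ‖f.coeff i‖ * ‖x‖ ^ i ≤ 1 * ‖x‖ ^ i := by gcongr; exact hcoeff i
      _ = ‖x‖ ^ i := one_mul _
      _ ≤ ‖x‖ ^ (d - 1) := by
          apply pow_le_pow_right₀ hx.le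
          simp only [Finset.mem_range] at hi; omega
  have hlt : ‖∑ i ∈ Finset.range d, f.coeff i * x ^ i‖ < ‖f.coeff d * x ^ d‖ := by
    rw [hlead']
    calc ‖∑ i ∈ Finset.range d, f.coeff i * x ^ i‖ ≤ ‖x‖ ^ (d - 1) := hrest
      _ < ‖x‖ ^ d := by apply pow_lt_pow_right₀ hx; omega
  have : ‖f.eval x‖ = ‖x‖ ^ d := by
    rw [heval, IsUltrametricDist.norm_add_eq_max_of_norm_ne_norm hlt.ne,
      max_eq_right hlt.le, hlead']
  rw [this]
  calc ‖x‖ = ‖x‖ ^ 1 := (pow_one _).symm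
    _ < ‖x‖ ^ d := by apply pow_lt_pow_right₀ hx; omega

/-- If `f(0) = 0` and `|f'(0)| < 1`, points of small positive norm strictly decrease in norm. -/
lemma norm_eval_lt {f : K[X]} {d : ℕ} (hdeg : f.natDegree = d)
    (hcoeff : ∀ i, ‖f.coeff i‖ ≤ 1)
    (h0 : f.eval 0 = 0) (hderiv : ‖f.derivative.eval 0‖ < 1)
    {x : K} (hx0 : x ≠ 0) (hx : ‖x‖ < 1) : ‖f.eval x‖ < ‖x‖ := by
  have hxpos : (0:ℝ) < ‖x‖ := norm_pos_iff.mpr hx0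
  have hc0 : f.coeff 0 = 0 := by rwa [Polynomial.coeff_zero_eq_eval_zero]
  have hc1 : ‖f.coeff 1‖ < 1 := by
    have : f.derivative.eval 0 = f.coeff 1 := by
      rw [← Polynomial.coeff_zero_eq_eval_zero, Polynomial.coeff_derivative]
      push_cast; ring
    rwa [this] at hderiv
  have heval := f.eval_eq_sum_range (x := x)
  rw [hdeg] at heval
  obtain ⟨i, hi, hle⟩ := IsUltrametricDist.exists_norm_finset_sum_le_of_nonempty
    (t := Finset.range (d + 1)) ⟨0, by simp⟩ (fun i => f.coeff i * x ^ i)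
  rw [← heval] at hle
  refine lt_of_le_of_lt hle ?_
  rcases i with _ | _ | i
  · simp [hc0, hxpos]
  · calc ‖f.coeff 1 * x ^ 1‖ = ‖f.coeff 1‖ * ‖x‖ := by rw [norm_mul, pow_one]
      _ < 1 * ‖x‖ := by gcongr
      _ = ‖x‖ := one_mul _
  · calc ‖f.coeff (i + 2) * x ^ (i + 2)‖ = ‖f.coeff (i + 2)‖ * ‖x‖ ^ (i + 2) := by
          rw [norm_mul, norm_pow]
      _ ≤ 1 * ‖x‖ ^ (i + 2) := by gcongr; exact hcoeff _
      _ = ‖x‖ ^ (i + 2) := one_mul _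
      _ < ‖x‖ ^ 1 := by apply pow_lt_pow_right_of_lt_one₀ hxpos hx; omega
      _ = ‖x‖ := pow_one _

/-- Every nonzero periodic point of a good-reduction polynomial fixing `0` with
attracting multiplier has norm exactly `1`. -/
lemma norm_periodic_eq_one {f : K[X]} {d : ℕ} (hd : 2 ≤ d) (hdeg : f.natDegree = d)
    (hcoeff : ∀ i, ‖f.coeff i‖ ≤ 1) (hlead : ‖f.leadingCoeff‖ = 1)
    (h0 : f.eval 0 = 0) (hderiv : ‖f.derivative.eval 0‖ < 1)
    {ξ : K} (hξ0 : ξ ≠ 0) (hper : ξ ∈ Function.periodicPts (fun x => f.eval x)) :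
    ‖ξ‖ = 1 := by
  obtain ⟨n, hn, hfix⟩ := hper
  set F : K → K := fun x => f.eval x with hF
  rcases lt_trichotomy ‖ξ‖ 1 with h | h | h
  · -- contracting regime: norms of iterates stay ≤ ‖ξ‖ and strictly drop
    exfalso
    have key : ∀ k, ‖F^[k] ξ‖ ≤ ‖ξ‖ := by
      intro k
      induction k with
      | zero => simp
      | succ k ih =>
        rw [Function.iterate_succ_apply']
        by_cases hy : F^[k] ξ = 0
        · rw [hy]
          show ‖f.eval 0‖ ≤ ‖ξ‖
          rw [h0, norm_zero]
          exact norm_nonneg _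
        · exact le_of_lt (lt_of_lt_of_le
            (norm_eval_lt hdeg hcoeff h0 hderiv hy (lt_of_le_of_lt ih h)) ih)
    obtain ⟨m, rfl⟩ : ∃ m, n = m + 1 := ⟨n - 1, by omega⟩
    have hm := key m
    have : ‖ξ‖ = ‖F (F^[m] ξ)‖ := by
      conv_lhs => rw [← hfix.eq]
      rw [Function.iterate_succ_apply']
    by_cases hy : F^[m] ξ = 0
    · rw [hy] at this
      have : ‖ξ‖ = 0 := by simpa [hF, h0] using this
      exact hξ0 (norm_eq_zero.mp this)
    · have := this.trans_lt (lt_of_lt_of_le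
        (norm_eval_lt hdeg hcoeff h0 hderiv hy (lt_of_le_of_lt hm h)) hm)
      exact lt_irrefl _ this
  · exact h
  · -- expanding regime: norms of iterates stay > 1 and grow
    exfalso
    have key : ∀ k, 1 < ‖F^[k] ξ‖ ∧ ‖ξ‖ ≤ ‖F^[k] ξ‖ := by
      intro k
      induction k with
      | zero => exact ⟨h, le_refl _⟩
      | succ k ih =>
        rw [Function.iterate_succ_apply']
        have := norm_eval_gt hd hdeg hcoeff hlead ih.1
        exact ⟨ih.1.trans this, ih.2.trans this.le⟩
    obtain ⟨m, rfl⟩ : ∃ m, n = m + 1 := ⟨n - 1, by omega⟩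
    have hm := key m
    have hlt := norm_eval_gt hd hdeg hcoeff hlead hm.1
    have : ‖ξ‖ = ‖F (F^[m] ξ)‖ := by
      conv_lhs => rw [← hfix.eq]
      rw [Function.iterate_succ_apply']
    rw [this] at hm
    exact absurd hm.2 (not_le.mpr hlt)

end Aux

/-- if `f` has good reduction, `f(0) = 0` and `‖f'(0)‖ < 1`, then for `n > 1`
the product of `‖ξ‖ ^ aₙ*(ξ)` over all nonzero periodic points `ξ` equals `1`. -/
theorem stmt3 {K : Type*} [NormedField K] [IsUltrametricDist K] [CompleteSpace K]
    [IsAlgClosed K] [CharZero K]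
    (p : ℕ) (hp : p.Prime) (hpK : ‖(p : K)‖ = (p : ℝ)⁻¹)
    (f : K[X]) (d : ℕ) (hd : 2 ≤ d) (hdeg : f.natDegree = d)
    (hcoeff : ∀ i, ‖f.coeff i‖ ≤ 1) (hlead : ‖f.leadingCoeff‖ = 1)
    (h0 : f.eval 0 = 0) (hderiv : ‖f.derivative.eval 0‖ < 1)
    (n : ℕ) (hn : 1 < n) :
    (∏ᶠ (ξ : K) (_ : ξ ≠ 0 ∧ ξ ∈ Function.periodicPts (fun x => f.eval x)),
        ‖ξ‖ ^ aStar f n ξ) = 1 := by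
  refine finprod_eq_one_of_forall_eq_one fun ξ => ?_
  classical
  rw [finprod_eq_if]
  split_ifs with h
  · rw [norm_periodic_eq_one hd hdeg hcoeff hlead h0 hderiv h.1 h.2, one_zpow]
  · rfl
end

section
/- Let f ∈ K[X] be a polynomial of degree d ≥ 2 and let ζ ∈ K be a periodic point of f with least period ℓ such that |(f⁽ℓ⁾)′(ζ)| > 1. Then for every ε > 0 there exists a periodic point ξ of f with ξ ≠ ζ and |ξ − ζ| < ε. -/
/-!
Conjugating by the translation `t ↦ t + ζ`, the polynomial `g = f⁽ℓ⁾` becomes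
`T = λ X + X ^ (k + 1) U` with `λ = g'(ζ)`, `k ≥ 1` and `U(0) ≠ 0`. Inductively
`T⁽ⁿ⁺¹⁾ = λ ^ (n + 1) X + X ^ (k + 1) Rₙ`, and since `|λ| > 1` the ultrametric inequality gives
`|Rₙ(0)| = |U(0)| |λ| ^ ((k + 1) n)`. The nonzero fixed points of `T⁽ⁿ⁺¹⁾` are the roots of
`Hₙ = (λ ^ (n + 1) - 1) + X ^ k Rₙ`. At the radius `|ξ|` of the smallest root of `Hₙ`, each linear
factor `X - r` has Gauss norm `|r|`, so submultiplicativity of the Gauss norm gives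
`|Rₙ(0)| |ξ| ^ k ≤ |λ ^ (n + 1) - 1| ≤ |λ| ^ (n + 1)`, i.e. `|ξ| ^ k ≤ |λ| / (|U(0)| |λ| ^ (k n))`,
which tends to `0`. Then `ζ + ξ` is a periodic point of `f` other than `ζ`, arbitrarily close to it.
-/
open Polynomial

lemma polyIter_eval {R : Type*} [CommSemiring R] (f : R[X]) (n : ℕ) (x : R) :
    (polyIter f n).eval x = (fun y => f.eval y)^[n] x := by
  induction n with
  | zero => simp [polyIter]
  | succ n ih => rw [polyIter, eval_comp, ih, Function.iterate_succ_apply']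

lemma polyIter_natDegree {K : Type*} [Field K] (f : K[X]) (n : ℕ) :
    (polyIter f n).natDegree = f.natDegree ^ n := by
  induction n with
  | zero => simp [polyIter]
  | succ n ih => rw [polyIter, natDegree_comp, ih, pow_succ']

lemma exists_comp_eq_C_mul_X_add_X_pow_mul {R : Type*} [CommRing R] {a b : R} {k : ℕ}
    (hk : k ≠ 0) (U V : R[X]) :
    ∃ W : R[X], (C a * X + X ^ (k + 1) * U).comp (C b * X + X ^ (k + 1) * V) =
      C (a * b) * X + X ^ (k + 1) * W ∧ W.coeff 0 = a * V.coeff 0 + b ^ (k + 1) * U.coeff 0 := by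
  have hS : C b * X + X ^ (k + 1) * V = X * (C b + X ^ k * V) := by ring
  refine ⟨C a * V + (C b + X ^ k * V) ^ (k + 1) * U.comp (X * (C b + X ^ k * V)), ?_, ?_⟩
  · rw [hS, add_comp, mul_comp, mul_comp, C_comp, X_comp, pow_comp, X_comp, mul_pow, C_mul]
    ring
  · simp [coeff_zero_eq_eval_zero, hk]

lemma exists_eq_X_pow_succ_mul {R : Type*} [CommRing R] {Q : R[X]} (hQ : Q ≠ 0)
    (h0 : Q.coeff 0 = 0) (h1 : Q.coeff 1 = 0) :
    ∃ k ≠ 0, ∃ U : R[X], U.coeff 0 ≠ 0 ∧ Q = X ^ (k + 1) * U := by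
  obtain ⟨U, hQU, hU⟩ := exists_eq_pow_rootMultiplicity_mul_and_not_dvd Q hQ 0
  have hX2 : 2 ≤ Q.rootMultiplicity 0 := by
    rw [le_rootMultiplicity_iff hQ, map_zero, sub_zero, X_pow_dvd_iff]
    intro i hi
    interval_cases i <;> assumption
  refine ⟨Q.rootMultiplicity 0 - 1, by omega, U, ?_, ?_⟩
  · simpa [X_dvd_iff] using hU
  · rwa [Nat.sub_add_cancel (by omega), ← sub_zero X, ← map_zero C]

lemma exists_taylor_sub_C_eq {R : Type*} [CommRing R] {g : R[X]} {ζ : R}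
    (hζ : g.eval ζ = ζ) (hg : 2 ≤ g.natDegree) :
    ∃ k ≠ 0, ∃ U : R[X], U.coeff 0 ≠ 0 ∧
      taylor ζ g - C ζ = C (g.derivative.eval ζ) * X + X ^ (k + 1) * U := by
  set Q := taylor ζ g - C ζ - C (g.derivative.eval ζ) * X
  have hQ : Q.coeff g.natDegree = g.leadingCoeff := by
    simp [Q, coeff_taylor_natDegree, coeff_C, coeff_X, show g.natDegree ≠ 0 by omega,
      show 1 ≠ g.natDegree by omega]
  have hg0 : g ≠ 0 := by rintro rfl; simp at hg
  obtain ⟨k, hk, U, hU, hQU⟩ := exists_eq_X_pow_succ_mul (Q := Q)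
    (fun h => leadingCoeff_ne_zero.2 hg0 (by rw [← hQ, h, coeff_zero]))
    (by simp [Q, taylor_coeff_zero, hζ]) (by simp [Q, taylor_coeff_one])
  exact ⟨k, hk, U, hU, by rw [← hQU]; ring⟩

lemma isPeriodicPt_add_of_eval_polyIter_taylor {R : Type*} [CommRing R] {g : R[X]} {ζ ξ : R}
    {n : ℕ} (h : (polyIter (taylor ζ g - C ζ) n).eval ξ = ξ) :
    Function.IsPeriodicPt (fun x => g.eval x) n (ξ + ζ) := by
  have hconj : Function.Semiconj (· + ζ) (fun t => (taylor ζ g - C ζ).eval t)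
      (fun x => g.eval x) := fun t => by simp [taylor_eval]
  rw [polyIter_eval] at h
  exact ((hconj.iterate_right n).eq ξ).symm.trans (congrArg (· + ζ) h)

section Ultrametric

variable {K : Type*} [NormedField K] [IsUltrametricDist K]

local notation "v" => NormedField.toAbsoluteValue K

lemma gaussNorm_X_sub_C_le {ρ : ℝ} (hρ : 0 ≤ ρ) {r : K} (hr : ρ ≤ ‖r‖) :
    (X - C r).gaussNorm v ρ ≤ ‖r‖ := by
  rw [sub_eq_add_neg, ← C_neg]
  refine (isNonarchimedean_gaussNorm v IsUltrametricDist.isNonarchimedean_norm hρ _ _).trans ?_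
  rw [gaussNorm_C, ← monomial_one_one_eq_X, gaussNorm_monomial]
  simpa [NormedField.toAbsoluteValue] using hr

lemma gaussNorm_multiset_prod_le {ι : Type*} (s : Multiset ι) (g : ι → K[X]) {ρ : ℝ}
    (hρ : 0 ≤ ρ) : (s.map g).prod.gaussNorm v ρ ≤ (s.map fun i => (g i).gaussNorm v ρ).prod := by
  induction s using Multiset.induction_on with
  | empty =>
    rw [Multiset.map_zero, Multiset.prod_zero, ← C_1, gaussNorm_C, Multiset.map_zero,
      Multiset.prod_zero]
    exact (map_one v).le
  | cons a s ih =>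
    simp only [Multiset.map_cons, Multiset.prod_cons]
    exact (gaussNorm_mul_le v IsUltrametricDist.isNonarchimedean_norm _ _ hρ).trans
      (mul_le_mul_of_nonneg_left ih (gaussNorm_nonneg _ _ hρ))

lemma Polynomial.Splits.norm_coeff_mul_pow_le {P : K[X]} (hP : P.Splits) {ρ : ℝ} (hρ : 0 ≤ ρ)
    (hroots : ∀ r ∈ P.roots, ρ ≤ ‖r‖) (k : ℕ) :
    ‖P.coeff k‖ * ρ ^ k ≤ ‖P.coeff 0‖ := calc
  ‖P.coeff k‖ * ρ ^ k ≤ P.gaussNorm v ρ := P.le_gaussNorm v hρ k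
  _ ≤ ‖P.leadingCoeff‖ * (P.roots.map fun r => (X - C r).gaussNorm v ρ).prod := by
    conv_lhs => rw [hP.eq_prod_roots]
    refine (gaussNorm_mul_le v IsUltrametricDist.isNonarchimedean_norm _ _ hρ).trans ?_
    rw [gaussNorm_C]
    exact mul_le_mul_of_nonneg_left (gaussNorm_multiset_prod_le _ _ hρ)
      (AbsoluteValue.nonneg _ _)
  _ ≤ ‖P.leadingCoeff‖ * (P.roots.map fun r => ‖r‖).prod := by
    gcongr
    exact Multiset.prod_map_le_prod_map₀ _ _ (fun _ _ => gaussNorm_nonneg _ _ hρ)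
      fun r hr => gaussNorm_X_sub_C_le hρ (hroots r hr)
  _ = ‖P.coeff 0‖ := by
    rw [hP.coeff_zero_eq_leadingCoeff_mul_prod_roots, norm_mul, norm_mul, norm_pow, norm_neg,
      norm_one, one_pow, one_mul]
    exact congrArg _ (map_multiset_prod normHom P.roots).symm

lemma exists_isRoot_norm_coeff_mul_pow_le [IsAlgClosed K] {P : K[X]} (h0 : P.coeff 0 ≠ 0)
    {k : ℕ} (hk : k ≠ 0) (hPk : P.coeff k ≠ 0) :
    ∃ ξ, P.IsRoot ξ ∧ ‖P.coeff k‖ * ‖ξ‖ ^ k ≤ ‖P.coeff 0‖ := by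
  have hP : P ≠ 0 := fun h => h0 (by simp [h])
  have hdeg : P.degree ≠ 0 :=
    (natDegree_pos_iff_degree_pos.1 <| (Nat.pos_of_ne_zero hk).trans_le
      (le_natDegree_of_ne_zero hPk)).ne'
  classical
  obtain ⟨r, hr⟩ := IsAlgClosed.exists_root P hdeg
  obtain ⟨ξ, hξ, hmin⟩ := P.roots.toFinset.exists_min_image (‖·‖)
    ⟨r, Multiset.mem_toFinset.2 ((mem_roots hP).2 hr)⟩
  simp only [Multiset.mem_toFinset] at hξ hmin
  exact ⟨ξ, (mem_roots hP).1 hξ,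
    (IsAlgClosed.splits P).norm_coeff_mul_pow_le (norm_nonneg ξ) hmin k⟩

lemma exists_fixedPt_norm_pow_le [IsAlgClosed K] {Λ : K} (hΛ : Λ ≠ 1) {k : ℕ} (hk : k ≠ 0)
    {R : K[X]} (hR : R.coeff 0 ≠ 0) :
    ∃ ξ : K, ξ ≠ 0 ∧ (C Λ * X + X ^ (k + 1) * R).eval ξ = ξ ∧
      ‖R.coeff 0‖ * ‖ξ‖ ^ k ≤ ‖Λ - 1‖ := by
  set H : K[X] := C (Λ - 1) + X ^ k * R
  have hH0 : H.coeff 0 = Λ - 1 := by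
    rw [coeff_add, coeff_C_zero, coeff_X_pow_mul', if_neg (by omega), add_zero]
  have hHk : H.coeff k = R.coeff 0 := by
    rw [coeff_add, coeff_C, if_neg hk, zero_add]
    simpa using coeff_X_pow_mul R k 0
  obtain ⟨ξ, hξ, hbound⟩ :=
    exists_isRoot_norm_coeff_mul_pow_le (hH0 ▸ sub_ne_zero.2 hΛ) hk (hHk ▸ hR)
  refine ⟨ξ, ?_, ?_, hHk ▸ hH0 ▸ hbound⟩
  · rintro rfl
    simp [H, hk, sub_eq_zero, hΛ] at hξ
  · have : (C Λ * X + X ^ (k + 1) * R).eval ξ - ξ = ξ * H.eval ξ := by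
      simp only [H, eval_add, eval_mul, eval_C, eval_X, eval_pow]; ring
    rw [hξ.eq_zero, mul_zero, sub_eq_zero] at this
    exact this

lemma exists_polyIter_succ_eq {lam : K} (hlam : 1 < ‖lam‖) {k : ℕ} (hk : k ≠ 0) {U : K[X]}
    (hU : U.coeff 0 ≠ 0) (n : ℕ) :
    ∃ R : K[X], polyIter (C lam * X + X ^ (k + 1) * U) (n + 1) =
      C (lam ^ (n + 1)) * X + X ^ (k + 1) * R ∧
      ‖R.coeff 0‖ = ‖U.coeff 0‖ * ‖lam‖ ^ ((k + 1) * n) := by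
  induction n with
  | zero => exact ⟨U, by simp [polyIter], by simp⟩
  | succ n ih =>
    obtain ⟨R, hR, hR0⟩ := ih
    obtain ⟨W, hW, hW0⟩ := exists_comp_eq_C_mul_X_add_X_pow_mul (a := lam) hk U R
    refine ⟨W, by rw [polyIter, hR, hW, ← pow_succ'], ?_⟩
    have hlt : ‖lam * R.coeff 0‖ < ‖(lam ^ (n + 1)) ^ (k + 1) * U.coeff 0‖ := by
      rw [norm_mul, hR0, norm_mul, norm_pow, norm_pow, ← pow_mul, mul_left_comm, mul_comm _ ‖_‖]
      refine mul_lt_mul_of_pos_left ?_ (norm_pos_iff.2 hU)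
      rw [← pow_succ']
      exact pow_lt_pow_right₀ hlam (by nlinarith [Nat.pos_of_ne_zero hk])
    rw [hW0, IsUltrametricDist.norm_add_eq_max_of_norm_ne_norm hlt.ne, max_eq_right hlt.le,
      norm_mul, norm_pow, norm_pow, ← pow_mul, mul_comm, mul_comm (n + 1)]

lemma exists_fixedPt_polyIter_near_zero [IsAlgClosed K] {lam : K} (hlam : 1 < ‖lam‖) {k : ℕ}
    (hk : k ≠ 0) {U : K[X]} (hU : U.coeff 0 ≠ 0) {ε : ℝ} (hε : 0 < ε) :
    ∃ n : ℕ, ∃ ξ : K, ξ ≠ 0 ∧ ‖ξ‖ < ε ∧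
      (polyIter (C lam * X + X ^ (k + 1) * U) (n + 1)).eval ξ = ξ := by
  set L := ‖lam‖
  set a := ‖U.coeff 0‖
  have ha : 0 < a := norm_pos_iff.2 hU
  obtain ⟨N, hN⟩ := pow_unbounded_of_one_lt (L / (a * ε ^ k)) (one_lt_pow₀ hlam hk)
  obtain ⟨R, hP, hR0⟩ := exists_polyIter_succ_eq hlam hk hU N
  have hR : R.coeff 0 ≠ 0 := by rw [← norm_pos_iff, hR0]; positivity
  have hΛ : 1 < ‖lam ^ (N + 1)‖ := by rw [norm_pow]; exact one_lt_pow₀ hlam N.succ_ne_zero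
  obtain ⟨ξ, hξ0, hfix, hbound⟩ :=
    exists_fixedPt_norm_pow_le (Λ := lam ^ (N + 1)) (fun h => by simp [h] at hΛ) hk hR
  refine ⟨N, ξ, hξ0, ?_, hP ▸ hfix⟩
  have hsub : ‖lam ^ (N + 1) - 1‖ ≤ L ^ (N + 1) := by
    have := IsUltrametricDist.norm_add_le_max (lam ^ (N + 1)) (-1)
    rwa [norm_neg, norm_one, max_eq_left hΛ.le, ← sub_eq_add_neg, norm_pow] at this
  have hξ : a * (L ^ k) ^ N * ‖ξ‖ ^ k ≤ L := by
    have hpos : 0 < L ^ N := by positivity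
    rw [hR0] at hbound
    refine le_of_mul_le_mul_left ?_ hpos
    calc L ^ N * (a * (L ^ k) ^ N * ‖ξ‖ ^ k) = a * L ^ ((k + 1) * N) * ‖ξ‖ ^ k := by ring
      _ ≤ L ^ (N + 1) := hbound.trans hsub
      _ = L ^ N * L := pow_succ L N
  rw [div_lt_iff₀ (by positivity)] at hN
  refine lt_of_pow_lt_pow_left₀ k hε.le <|
    lt_of_mul_lt_mul_left (a := a * (L ^ k) ^ N) ?_ (by positivity)
  linarith

end Ultrametric

theorem stmt7_general {K : Type*} [NormedField K] [IsUltrametricDist K]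
    [IsAlgClosed K]
    (f : K[X]) (d : ℕ) (hd : 2 ≤ d) (hdeg : f.natDegree = d)
    (ζ : K) (hζ : ζ ∈ Function.periodicPts (fun x => f.eval x))
    (ℓ : ℕ) (hℓ : ℓ = Function.minimalPeriod (fun x => f.eval x) ζ)
    (hmult : 1 < ‖(polyIter f ℓ).derivative.eval ζ‖) :
    ∀ ε > (0 : ℝ), ∃ ξ : K, ξ ∈ Function.periodicPts (fun x => f.eval x) ∧
      ξ ≠ ζ ∧ ‖ξ - ζ‖ < ε := by
  intro ε hε
  have hℓ0 : 0 < ℓ := hℓ ▸ Function.minimalPeriod_pos_of_mem_periodicPts hζ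
  have hfixed : (polyIter f ℓ).eval ζ = ζ := by
    rw [polyIter_eval, hℓ]
    exact Function.iterate_minimalPeriod
  have hdeg' : 2 ≤ (polyIter f ℓ).natDegree := by
    rw [polyIter_natDegree, hdeg]
    exact hd.trans (Nat.le_self_pow hℓ0.ne' d)
  obtain ⟨k, hk, U, hU, hT⟩ := exists_taylor_sub_C_eq hfixed hdeg'
  obtain ⟨n, ξ, hξ0, hξε, hfix⟩ := exists_fixedPt_polyIter_near_zero hmult hk hU hε
  rw [← hT] at hfix
  have hper := isPeriodicPt_add_of_eval_polyIter_taylor hfix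
  refine ⟨ξ + ζ, Function.mk_mem_periodicPts (Nat.mul_pos hℓ0 n.succ_pos) ?_,
    by simpa using hξ0, by simpa using hξε⟩
  have hiter : (fun x => f.eval x)^[ℓ] = fun x => (polyIter f ℓ).eval x :=
    funext fun x => (polyIter_eval f ℓ x).symm
  rw [Function.IsPeriodicPt, Function.IsFixedPt, Function.iterate_mul, hiter]
  exact hper

/-- if `ζ` is a periodic point of least period `ℓ` with `‖(f⁽ℓ⁾)'(ζ)‖ > 1`,
then there are periodic points `ξ ≠ ζ` arbitrarily close to `ζ`. -/
theorem stmt7 {K : Type*} [NormedField K] [IsUltrametricDist K] [CompleteSpace K]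
    [IsAlgClosed K] [CharZero K]
    (p : ℕ) (hp : p.Prime) (hpK : ‖(p : K)‖ = (p : ℝ)⁻¹)
    (f : K[X]) (d : ℕ) (hd : 2 ≤ d) (hdeg : f.natDegree = d)
    (ζ : K) (hζ : ζ ∈ Function.periodicPts (fun x => f.eval x))
    (ℓ : ℕ) (hℓ : ℓ = Function.minimalPeriod (fun x => f.eval x) ζ)
    (hmult : 1 < ‖(polyIter f ℓ).derivative.eval ζ‖) :
    ∀ ε > (0 : ℝ), ∃ ξ : K, ξ ∈ Function.periodicPts (fun x => f.eval x) ∧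
      ξ ≠ ζ ∧ ‖ξ - ζ‖ < ε :=
  stmt7_general f d hd hdeg ζ hζ ℓ hℓ hmult
end

section
/- Let f ∈ K[X] be a polynomial of degree d ≥ 2 with good reduction, let q ∈ 𝒪, and let 0 < s < 1. Then the set of periodic points ξ of f with |ξ − q| ≤ s is finite. -/
/-
Suppose infinitely many periodic points lie in the ball `B = {x | ‖x - q‖ ≤ s}`; take `C` of them
and a common period `m`. The polynomial `f^[m] - X` has integral coefficients and a unit leading
coefficient, so its roots are integral and on `B` its absolute value is the product of the distances
to its roots, at least `C` of which lie in `B`: hence `‖f^[m] x - x‖ ≤ s ^ C` on all of `B`.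

For `C` large this forces every periodic point `η ∈ B` of `f` to be fixed by `h = f^[m]`, by a
rigidity argument. Rescaling around `η` (`z ↦ η + π z` with `‖π‖` small) turns `h` into a
polynomial `u` whose coefficients are `‖p‖²`-close to those of `X`. Along an orbit of such a `u`
the steps `u x_k - x_k` stay `‖p‖²`-close to `u x_0 - x_0`, so a period `n` gives
`‖n‖ ‖u x_0 - x_0‖ ≤ ‖p‖² ‖u x_0 - x_0‖`. For `p ∤ n` this forces `u x_0 = x_0`; for `n = p k`
one passes to `u^[p]`, which is as close to `X` as `u`.

So all periodic points of `f` in `B` are roots of the nonzero polynomial `f^[m] - X`, and there are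
finitely many of them, a contradiction.
-/

open Polynomial Function

namespace IsUltrametricDist

variable {K : Type*} [NormedField K] [IsUltrametricDist K]

theorem norm_sub_le_max_s8 (x y : K) : ‖x - y‖ ≤ max ‖x‖ ‖y‖ := by
  simpa [sub_eq_add_neg] using norm_add_le_max x (-y)

theorem norm_le_one_of_norm_sub_le_one {x q : K} (hq : ‖q‖ ≤ 1) (hx : ‖x - q‖ ≤ 1) : ‖x‖ ≤ 1 := by
  simpa using (norm_add_le_max (x - q) q).trans (max_le hx hq)

theorem norm_natCast_eq_one_of_not_dvd {p : ℕ} (hp : p.Prime) (hpK : ‖(p : K)‖ < 1) {n : ℕ}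
    (hn : ¬ p ∣ n) : ‖(n : K)‖ = 1 := by
  refine le_antisymm (norm_natCast_le_one K n) (not_lt.1 fun hlt => ?_)
  obtain ⟨a, b, hab⟩ := Nat.isCoprime_iff_coprime.2
    ((Nat.coprime_comm.1 (hp.coprime_iff_not_dvd.2 hn)))
  have hK : (a : K) * n + b * p = 1 := by exact_mod_cast congrArg (Int.cast : ℤ → K) hab
  have h1 : ‖(a : K) * n‖ < 1 := by
    rw [norm_mul]
    exact mul_lt_one_of_nonneg_of_lt_one_right (norm_intCast_le_one K a)
      (norm_nonneg _) hlt
  have h2 : ‖(b : K) * p‖ < 1 := by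
    rw [norm_mul]
    exact mul_lt_one_of_nonneg_of_lt_one_right (norm_intCast_le_one K b)
      (norm_nonneg _) hpK
  have := (norm_add_le_max _ _).trans_lt (max_lt h1 h2)
  rw [hK, norm_one] at this
  exact this.false

end IsUltrametricDist

theorem Function.exists_pos_forall_isPeriodicPt {α : Type*} {f : α → α} (T : Finset α)
    (hT : ∀ x ∈ T, x ∈ periodicPts f) : ∃ n > 0, ∀ x ∈ T, IsPeriodicPt f n x :=
  ⟨∏ x ∈ T, minimalPeriod f x,
    Finset.prod_pos fun x hx => minimalPeriod_pos_of_mem_periodicPts (hT x hx),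
    fun x hx => (isPeriodicPt_minimalPeriod f x).trans_dvd (Finset.dvd_prod_of_mem _ hx)⟩

namespace Polynomial

theorem eval_iterate_comp_X {R : Type*} [CommSemiring R] (f : R[X]) (n : ℕ) :
    (fun x => (f.comp^[n] X).eval x) = (fun x => f.eval x)^[n] := by
  ext x
  rw [iterate_comp_eval, eval_X]

variable {K : Type*} [NormedField K]

theorem supNorm_le_iff {φ : K[X]} {t : ℝ} : φ.supNorm ≤ t ↔ ∀ i, ‖φ.coeff i‖ ≤ t := by
  refine ⟨fun h i => (le_supNorm φ i).trans h, fun h => ?_⟩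
  obtain ⟨i, hi⟩ := exists_eq_supNorm φ
  exact hi ▸ h i

@[simp]
theorem supNorm_neg (φ : K[X]) : (-φ).supNorm = φ.supNorm := by
  simp [supNorm_eq_iSup]

def HasGoodReduction (f : K[X]) : Prop := f.supNorm ≤ 1 ∧ ‖f.leadingCoeff‖ = 1

theorem HasGoodReduction.ne_zero {f : K[X]} (hf : HasGoodReduction f) : f ≠ 0 := by
  rintro rfl
  simpa using hf.2

variable [IsUltrametricDist K]

theorem supNorm_add_le (φ ψ : K[X]) : (φ + ψ).supNorm ≤ max φ.supNorm ψ.supNorm :=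
  supNorm_le_iff.2 fun i => by
    rw [coeff_add]
    exact (IsUltrametricDist.norm_add_le_max _ _).trans
      (max_le_max (le_supNorm φ i) (le_supNorm ψ i))

theorem supNorm_sub_le (φ ψ : K[X]) : (φ - ψ).supNorm ≤ max φ.supNorm ψ.supNorm := by
  simpa [sub_eq_add_neg] using supNorm_add_le φ (-ψ)

theorem supNorm_sum_le {ι : Type*} (s : Finset ι) (F : ι → K[X]) {t : ℝ} (ht : 0 ≤ t)
    (h : ∀ i ∈ s, (F i).supNorm ≤ t) : (∑ i ∈ s, F i).supNorm ≤ t :=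
  supNorm_le_iff.2 fun n => by
    rw [finsetSum_coeff]
    exact IsUltrametricDist.norm_sum_le_of_forall_le_of_nonneg ht
      fun i hi => (le_supNorm _ n).trans (h i hi)

theorem supNorm_mul_le (φ ψ : K[X]) : (φ * ψ).supNorm ≤ φ.supNorm * ψ.supNorm :=
  supNorm_le_iff.2 fun n => by
    rw [coeff_mul]
    refine IsUltrametricDist.norm_sum_le_of_forall_le_of_nonneg
      (mul_nonneg (supNorm_nonneg φ) (supNorm_nonneg ψ)) fun ij _ => ?_
    rw [norm_mul]
    exact mul_le_mul (le_supNorm φ _) (le_supNorm ψ _) (norm_nonneg _) (supNorm_nonneg φ)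

theorem supNorm_pow_le_one {φ : K[X]} (hφ : φ.supNorm ≤ 1) (n : ℕ) : (φ ^ n).supNorm ≤ 1 := by
  induction n with
  | zero => rw [pow_zero, ← C_1, supNorm_C, norm_one]
  | succ n ih =>
    rw [pow_succ]
    exact (supNorm_mul_le _ _).trans (mul_le_one₀ ih (supNorm_nonneg φ) hφ)

theorem supNorm_pow_sub_pow_le {a b : K[X]} (ha : a.supNorm ≤ 1) (hb : b.supNorm ≤ 1) (n : ℕ) :
    (a ^ n - b ^ n).supNorm ≤ (a - b).supNorm := by
  rw [← geom_sum₂_mul]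
  refine (supNorm_mul_le _ _).trans (mul_le_of_le_one_left (supNorm_nonneg _) ?_)
  refine supNorm_sum_le _ _ zero_le_one fun i _ => (supNorm_mul_le _ _).trans ?_
  exact mul_le_one₀ (supNorm_pow_le_one ha i) (supNorm_nonneg _) (supNorm_pow_le_one hb _)

theorem supNorm_sum_C_mul_le (φ : K[X]) (G : ℕ → K[X]) {t : ℝ} (ht : 0 ≤ t)
    (hG : ∀ e, (G e).supNorm ≤ t) :
    (∑ e ∈ φ.support, C (φ.coeff e) * G e).supNorm ≤ φ.supNorm * t :=
  supNorm_sum_le _ _ (mul_nonneg (supNorm_nonneg φ) ht) fun e _ =>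
    (supNorm_mul_le _ _).trans <| by
      rw [supNorm_C]
      exact mul_le_mul (le_supNorm φ e) (hG e) (supNorm_nonneg _) (supNorm_nonneg φ)

theorem supNorm_comp_le (φ : K[X]) {a : K[X]} (ha : a.supNorm ≤ 1) :
    (φ.comp a).supNorm ≤ φ.supNorm := by
  rw [comp_eq_sum_left, sum_def]
  simpa using supNorm_sum_C_mul_le φ (a ^ ·) zero_le_one (supNorm_pow_le_one ha)

theorem supNorm_comp_sub_comp_le (φ : K[X]) {a b : K[X]} (ha : a.supNorm ≤ 1)
    (hb : b.supNorm ≤ 1) : (φ.comp a - φ.comp b).supNorm ≤ φ.supNorm * (a - b).supNorm := by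
  rw [comp_eq_sum_left, comp_eq_sum_left, sum_def, sum_def, ← Finset.sum_sub_distrib]
  simp_rw [← mul_sub]
  exact supNorm_sum_C_mul_le φ _ (supNorm_nonneg _) (supNorm_pow_sub_pow_le ha hb)

theorem norm_eval_le (φ : K[X]) {x : K} (hx : ‖x‖ ≤ 1) : ‖φ.eval x‖ ≤ φ.supNorm := by
  have := supNorm_comp_le φ (a := C x) (by rwa [supNorm_C])
  rwa [comp_C, supNorm_C] at this

theorem norm_eval_sub_eval_le (φ : K[X]) {x y : K} (hx : ‖x‖ ≤ 1) (hy : ‖y‖ ≤ 1) :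
    ‖φ.eval x - φ.eval y‖ ≤ φ.supNorm * ‖x - y‖ := by
  have := supNorm_comp_sub_comp_le φ (a := C x) (b := C y) (by rwa [supNorm_C])
    (by rwa [supNorm_C])
  rwa [comp_C, comp_C, ← C_sub, ← C_sub, supNorm_C, supNorm_C] at this

theorem supNorm_iterate_comp_le_one {u : K[X]} (hu : u.supNorm ≤ 1) (n : ℕ) :
    (u.comp^[n] X).supNorm ≤ 1 := by
  induction n with
  | zero => simp
  | succ n ih =>
    rw [iterate_succ_apply']
    exact (supNorm_comp_le u ih).trans hu

theorem supNorm_le_one_of_supNorm_sub_X_le_one {u : K[X]} (hu : (u - X).supNorm ≤ 1) :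
    u.supNorm ≤ 1 := by
  simpa using (supNorm_add_le (u - X) X).trans (max_le hu supNorm_X.le)

theorem supNorm_iterate_comp_sub_X_le {u : K[X]} (hu : (u - X).supNorm ≤ 1) (n : ℕ) :
    (u.comp^[n] X - X).supNorm ≤ (u - X).supNorm := by
  induction n with
  | zero => simp [supNorm_nonneg]
  | succ n ih =>
    have hcomp : u.comp^[n + 1] X - X = (u - X).comp (u.comp^[n] X) + (u.comp^[n] X - X) := by
      rw [iterate_succ_apply', sub_comp, X_comp]; ring
    rw [hcomp]
    refine (supNorm_add_le _ _).trans (max_le (supNorm_comp_le _ ?_) ih)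
    exact supNorm_iterate_comp_le_one (supNorm_le_one_of_supNorm_sub_X_le_one hu) n

theorem norm_iterate_eval_sub_sub_le {u : K[X]} (hu : (u - X).supNorm ≤ 1) {x : K}
    (hx : ‖x‖ ≤ 1) (n : ℕ) :
    ‖(fun y => u.eval y)^[n] x - x - n * (u.eval x - x)‖ ≤ (u - X).supNorm * ‖u.eval x - x‖ := by
  set ε := (u - X).supNorm
  set g : K → K := fun y => u.eval y - y with hg
  set y : ℕ → K := fun k => (fun y => u.eval y)^[k] x with hy
  have hy_le : ∀ k, ‖y k‖ ≤ 1 := fun k => by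
    simpa [hy] using norm_eval_le (u.comp^[k] X) hx |>.trans
      (supNorm_iterate_comp_le_one (supNorm_le_one_of_supNorm_sub_X_le_one hu) k)
  have hg_lip : ∀ a b : K, ‖a‖ ≤ 1 → ‖b‖ ≤ 1 → ‖g a - g b‖ ≤ ε * ‖a - b‖ := fun a b ha hb => by
    have := norm_eval_sub_eval_le (u - X) ha hb
    rwa [eval_sub, eval_sub, eval_X, eval_X] at this
  have hstep : ∀ k, y (k + 1) - y k = g (y k) := fun k => by
    simp only [hy, hg, iterate_succ_apply']
  have hconst : ∀ k, ‖g (y k) - g x‖ ≤ ε * ‖g x‖ := by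
    intro k
    induction k with
    | zero => simpa [hy] using mul_nonneg (supNorm_nonneg _) (norm_nonneg _)
    | succ k ih =>
      have hgk : ‖g (y k)‖ ≤ ‖g x‖ := by
        simpa using (IsUltrametricDist.norm_add_le_max (g (y k) - g x) (g x)).trans
          (max_le (ih.trans (mul_le_of_le_one_left (norm_nonneg _) hu)) le_rfl)
      calc ‖g (y (k + 1)) - g x‖
          = ‖(g (y (k + 1)) - g (y k)) + (g (y k) - g x)‖ := by rw [sub_add_sub_cancel]
        _ ≤ max (ε * ‖y (k + 1) - y k‖) (ε * ‖g x‖) :=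
          (IsUltrametricDist.norm_add_le_max _ _).trans
            (max_le_max (hg_lip _ _ (hy_le _) (hy_le _)) ih)
        _ ≤ ε * ‖g x‖ := by
          rw [hstep]
          exact max_le (mul_le_mul_of_nonneg_left hgk (supNorm_nonneg _)) le_rfl
  have htelescope : y n - x - n * g x = ∑ k ∈ Finset.range n, (g (y k) - g x) := by
    rw [Finset.sum_sub_distrib, ← Finset.sum_congr rfl fun k _ => hstep k, Finset.sum_range_sub]
    simp [hy]
  rw [htelescope]
  exact IsUltrametricDist.norm_sum_le_of_forall_le_of_nonneg
    (mul_nonneg (supNorm_nonneg _) (norm_nonneg _)) fun k _ => hconst k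

theorem isFixedPt_of_isPeriodicPt_of_supNorm_sub_X_lt_norm_natCast {u : K[X]} {n : ℕ}
    (hu : (u - X).supNorm < ‖(n : K)‖) {x : K} (hx : ‖x‖ ≤ 1)
    (hper : IsPeriodicPt (fun y => u.eval y) n x) : IsFixedPt (fun y => u.eval y) x := by
  have hu1 : (u - X).supNorm ≤ 1 := hu.le.trans (IsUltrametricDist.norm_natCast_le_one K n)
  have h := norm_iterate_eval_sub_sub_le hu1 hx n
  rw [hper.eq, sub_self, zero_sub, norm_neg, norm_mul] at h
  have : ‖u.eval x - x‖ = 0 := by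
    by_contra hne
    exact (mul_lt_mul_of_pos_right hu (lt_of_le_of_ne (norm_nonneg _) (Ne.symm hne))).not_ge h
  exact sub_eq_zero.1 (norm_eq_zero.1 this)

theorem isFixedPt_of_isPeriodicPt_of_supNorm_sub_X_lt {p : ℕ} (hp : p.Prime)
    (hpK : ‖(p : K)‖ < 1) {u : K[X]} (hu : (u - X).supNorm < ‖(p : K)‖) {x : K} (hx : ‖x‖ ≤ 1)
    {n : ℕ} (hn : 0 < n) (hper : IsPeriodicPt (fun y => u.eval y) n x) :
    IsFixedPt (fun y => u.eval y) x := by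
  induction n using Nat.strong_induction_on generalizing u with
  | _ n ih =>
  by_cases hpn : p ∣ n
  · obtain ⟨m, rfl⟩ := hpn
    have hm : 0 < m := Nat.pos_of_mul_pos_left hn
    have hu1 : (u - X).supNorm ≤ 1 := hu.le.trans (IsUltrametricDist.norm_natCast_le_one K p)
    have hv := eval_iterate_comp_X u p
    have hfix : IsFixedPt (fun y => (u.comp^[p] X).eval y) x := by
      refine ih m (lt_mul_left hm hp.one_lt) ((supNorm_iterate_comp_sub_X_le hu1 p).trans_lt hu)
        hm ?_
      rw [hv, IsPeriodicPt, ← iterate_mul]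
      exact hper
    rw [hv] at hfix
    exact isFixedPt_of_isPeriodicPt_of_supNorm_sub_X_lt_norm_natCast hu hx hfix
  · refine isFixedPt_of_isPeriodicPt_of_supNorm_sub_X_lt_norm_natCast ?_ hx hper
    rw [IsUltrametricDist.norm_natCast_eq_one_of_not_dvd hp hpK hpn]
    exact hu.trans hpK

theorem norm_coeff_one_mul_le {W : K[X]} (hW : W.supNorm ≤ 1) {π : K} (hπ : ‖π‖ ≤ 1) {b : ℝ}
    (h0 : ‖W.eval 0‖ ≤ b) (hπb : ‖W.eval π‖ ≤ b) (hπ2 : ‖π‖ ^ 2 ≤ b) :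
    ‖W.coeff 1 * π‖ ≤ b := by
  set R := W.divX.divX
  have hR : ‖R.eval π‖ ≤ 1 :=
    (norm_eval_le R hπ).trans (supNorm_le_iff.2 fun i => by
      simpa [R, coeff_divX] using (le_supNorm W (i + 2)).trans hW)
  have hdecomp : W.coeff 1 * π = W.eval π - W.eval 0 - R.eval π * π ^ 2 := by
    have hW₀ : W.eval π = W.divX.eval π * π + W.coeff 0 := by
      conv_lhs => rw [← divX_mul_X_add W]
      simp
    have hW₁ : W.divX.eval π = R.eval π * π + W.coeff 1 := by
      conv_lhs => rw [← divX_mul_X_add W.divX]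
      simp [R, coeff_divX]
    rw [hW₀, hW₁, ← coeff_zero_eq_eval_zero]
    ring
  rw [hdecomp]
  refine (IsUltrametricDist.norm_sub_le_max_s8 _ _).trans (max_le ?_ ?_)
  · exact (IsUltrametricDist.norm_sub_le_max_s8 _ _).trans (max_le hπb h0)
  · rw [norm_mul, norm_pow]
    exact (mul_le_of_le_one_left (by positivity) hR).trans hπ2

theorem supNorm_C_inv_mul_comp_C_mul_X_le {W : K[X]} (hW : W.supNorm ≤ 1) {π : K} (hπ0 : π ≠ 0)
    {ε : ℝ} (hε : ε ≤ 1) (hπε : ‖π‖ ≤ ε) (h0 : ‖W.eval 0‖ ≤ ‖π‖ * ε)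
    (hπ : ‖W.eval π‖ ≤ ‖π‖ * ε) : (C π⁻¹ * W.comp (C π * X)).supNorm ≤ ε := by
  have hπpos : 0 < ‖π‖ := norm_pos_iff.2 hπ0
  have hπ2 : ‖π‖ ^ 2 ≤ ‖π‖ * ε := by rw [sq]; exact mul_le_mul_of_nonneg_left hπε hπpos.le
  refine supNorm_le_iff.2 fun j => ?_
  rw [coeff_C_mul, comp_C_mul_X_coeff, norm_mul, norm_mul, norm_pow, norm_inv,
    inv_mul_le_iff₀ hπpos]
  match j with
  | 0 => simpa [coeff_zero_eq_eval_zero] using h0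
  | 1 => simpa using norm_coeff_one_mul_le hW (hπε.trans hε) h0 hπ hπ2
  | j + 2 =>
    calc ‖W.coeff (j + 2)‖ * ‖π‖ ^ (j + 2) ≤ 1 * ‖π‖ ^ 2 :=
          mul_le_mul ((le_supNorm W _).trans hW)
            (pow_le_pow_of_le_one hπpos.le (hπε.trans hε) (by omega)) (by positivity) zero_le_one
      _ ≤ ‖π‖ * ε := by rw [one_mul]; exact hπ2

theorem isFixedPt_of_isPeriodicPt_of_norm_eval_sub_le {p : ℕ} (hp : p.Prime)
    (hpK : ‖(p : K)‖ < 1) {h : K[X]} (hh : h.supNorm ≤ 1) {η π : K} (hη : ‖η‖ ≤ 1) (hπ0 : π ≠ 0)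
    {ε : ℝ} (hε : ε < ‖(p : K)‖) (hπε : ‖π‖ ≤ ε) (h0 : ‖h.eval η - η‖ ≤ ‖π‖ * ε)
    (hπ : ‖h.eval (π + η) - (π + η)‖ ≤ ‖π‖ * ε) {n : ℕ} (hn : 0 < n)
    (hper : IsPeriodicPt (fun x => h.eval x) n η) : IsFixedPt (fun x => h.eval x) η := by
  set W := h.comp (X + C η) - (X + C η)
  have hW_eval : ∀ z, W.eval z = h.eval (z + η) - (z + η) := fun z => by simp [W]
  have hXη : (X + C η).supNorm ≤ 1 :=
    (supNorm_add_le _ _).trans (max_le supNorm_X.le (by rwa [supNorm_C]))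
  have hW : W.supNorm ≤ 1 :=
    (supNorm_sub_le _ _).trans (max_le ((supNorm_comp_le h hXη).trans hh) hXη)
  set u := X + C π⁻¹ * W.comp (C π * X)
  have hu : (u - X).supNorm < ‖(p : K)‖ := by
    rw [add_sub_cancel_left]
    refine (supNorm_C_inv_mul_comp_C_mul_X_le hW hπ0
      (hε.le.trans (IsUltrametricDist.norm_natCast_le_one K p)) hπε ?_ ?_).trans_lt hε
    · simpa [hW_eval] using h0
    · simpa [hW_eval] using hπ
  -- the affine change of variables `y = η + π z` turns `h` near `η` into `u` near `0`
  have hconj : Semiconj (fun y => π⁻¹ * (y - η)) (fun x => h.eval x) (fun z => u.eval z) := by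
    intro y
    simp only [u, eval_add, eval_X, eval_mul, eval_C, eval_comp, hW_eval]
    field_simp
    rw [sub_add_cancel]
    ring
  have hfix := isFixedPt_of_isPeriodicPt_of_supNorm_sub_X_lt hp hpK hu (by simp) hn
    (hper.map hconj)
  have := (hconj η).trans hfix
  simpa [IsFixedPt, hπ0, sub_eq_zero] using this

theorem HasGoodReduction.iterate_comp {f : K[X]} (hf : HasGoodReduction f)
    (hd : f.natDegree ≠ 0) (n : ℕ) : HasGoodReduction (f.comp^[n] X) := by
  refine ⟨supNorm_iterate_comp_le_one hf.1 n, ?_⟩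
  induction n with
  | zero => simp
  | succ n ih =>
    have hFn : (f.comp^[n] X).natDegree ≠ 0 := by simp [natDegree_iterate_comp, hd]
    rw [iterate_succ_apply', leadingCoeff_comp hFn, norm_mul, norm_pow, hf.2, ih, one_pow,
      one_mul]

theorem HasGoodReduction.sub_X {f : K[X]} (hf : HasGoodReduction f) (hd : 1 < f.natDegree) :
    HasGoodReduction (f - X) := by
  have hdeg : (X : K[X]).degree < f.degree := degree_lt_degree (by rwa [natDegree_X])
  exact ⟨(supNorm_sub_le _ _).trans (max_le hf.1 supNorm_X.le),
    by rw [leadingCoeff_sub_of_degree_lt hdeg]; exact hf.2⟩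

theorem HasGoodReduction.norm_le_one_of_isRoot {Q : K[X]} (hQ : HasGoodReduction Q) {ρ : K}
    (hρ : Q.IsRoot ρ) : ‖ρ‖ ≤ 1 := by
  by_contra! hρ1
  set D := Q.natDegree
  have hlc0 : Q.leadingCoeff ≠ 0 := norm_ne_zero_iff.1 (hQ.2 ▸ one_ne_zero)
  have htop : Q.leadingCoeff * ρ ^ D = -∑ i ∈ Finset.range D, Q.coeff i * ρ ^ i := by
    rw [eq_neg_iff_add_eq_zero, add_comm, leadingCoeff,
      ← Finset.sum_range_succ (fun i => Q.coeff i * ρ ^ i) D, ← eval_eq_sum_range]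
    exact hρ
  obtain hD | hD := Nat.eq_zero_or_pos D
  · simp [hD, hlc0] at htop
  have hlow : ‖∑ i ∈ Finset.range D, Q.coeff i * ρ ^ i‖ ≤ ‖ρ‖ ^ (D - 1) := by
    refine IsUltrametricDist.norm_sum_le_of_forall_le_of_nonneg (by positivity) fun i hi => ?_
    rw [norm_mul, norm_pow]
    exact (mul_le_of_le_one_left (by positivity) ((le_supNorm Q i).trans hQ.1)).trans
      (pow_le_pow_right₀ hρ1.le (by simp at hi; omega))
  rw [← norm_neg, ← htop, norm_mul, hQ.2, one_mul, norm_pow] at hlow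
  exact (pow_lt_pow_right₀ hρ1 (Nat.sub_lt hD one_pos)).not_ge hlow

theorem HasGoodReduction.norm_eval_le_pow_card [IsAlgClosed K] {Q : K[X]}
    (hQ : HasGoodReduction Q) {T : Finset K} (hT : ∀ η ∈ T, Q.IsRoot η) {x : K} (hx : ‖x‖ ≤ 1)
    {s : ℝ} (hxT : ∀ η ∈ T, ‖x - η‖ ≤ s) : ‖Q.eval x‖ ≤ s ^ T.card := by
  have hQ0 : Q ≠ 0 := hQ.ne_zero
  obtain ⟨R, hR⟩ := Multiset.le_iff_exists_add.1 <|
    (Multiset.le_iff_subset T.nodup).2 fun η hη => (mem_roots hQ0).2 (hT η hη)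
  have hTprod : ‖(T.val.map (x - ·)).prod‖ ≤ s ^ T.card := by
    rw [← Finset.prod_eq_multiset_prod, norm_prod, ← Finset.prod_const]
    exact Finset.prod_le_prod (fun _ _ => norm_nonneg _) hxT
  have hR1 : ∀ ρ ∈ R, ‖x - ρ‖ ≤ 1 := fun ρ hρ => by
    have hρQ : Q.IsRoot ρ := (mem_roots hQ0).1 (hR ▸ Multiset.mem_add.2 (Or.inr hρ))
    exact (IsUltrametricDist.norm_sub_le_max_s8 _ _).trans (max_le hx (hQ.norm_le_one_of_isRoot hρQ))
  have hRprod : ‖(R.map (x - ·)).prod‖ ≤ 1 :=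
    calc ‖(R.map (x - ·)).prod‖ = (R.map fun ρ => ‖x - ρ‖).prod := by
          rw [← normHom_apply, map_multiset_prod, Multiset.map_map]
          rfl
      _ ≤ (R.map fun _ => (1 : ℝ)).prod :=
          Multiset.prod_map_le_prod_map₀ _ _ (fun _ _ => norm_nonneg _) hR1
      _ = 1 := by simp
  rw [(IsAlgClosed.splits Q).eval_eq_prod_roots, norm_mul, hQ.2, one_mul, hR, Multiset.map_add,
    Multiset.prod_add, norm_mul]
  exact (mul_le_of_le_one_right (norm_nonneg _) hRprod).trans hTprod

theorem HasGoodReduction.iterate_comp_sub_X {f : K[X]} (hf : HasGoodReduction f)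
    (hd : 1 < f.natDegree) {n : ℕ} (hn : 0 < n) : HasGoodReduction (f.comp^[n] X - X) :=
  (hf.iterate_comp (by omega) n).sub_X <| by
    rw [natDegree_iterate_comp, natDegree_X, mul_one]
    exact Nat.one_lt_pow hn.ne' hd

theorem HasGoodReduction.exists_iterate_norm_eval_sub_le [IsAlgClosed K] {f : K[X]}
    (hf : HasGoodReduction f) (hd : 1 < f.natDegree) {q : K} (hq : ‖q‖ ≤ 1) {s : ℝ} (hs : s ≤ 1)
    {T : Finset K} (hT : ∀ η ∈ T, η ∈ periodicPts (fun x => f.eval x) ∧ ‖η - q‖ ≤ s) :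
    ∃ m > 0, ∀ x, ‖x - q‖ ≤ s → ‖(f.comp^[m] X).eval x - x‖ ≤ s ^ T.card := by
  obtain ⟨m, hm, hTm⟩ := exists_pos_forall_isPeriodicPt T fun η hη => (hT η hη).1
  refine ⟨m, hm, fun x hx => ?_⟩
  have hroots : ∀ η ∈ T, (f.comp^[m] X - X).IsRoot η := fun η hη => by
    rw [IsRoot, eval_sub, eval_X, sub_eq_zero]
    exact (congrFun (eval_iterate_comp_X f m) η).trans (hTm η hη).eq
  have hxT : ∀ η ∈ T, ‖x - η‖ ≤ s := fun η hη => by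
    simpa using (IsUltrametricDist.norm_sub_le_max_s8 (x - q) (η - q)).trans
      (max_le hx (hT η hη).2)
  simpa using (hf.iterate_comp_sub_X hd hm).norm_eval_le_pow_card hroots
    (IsUltrametricDist.norm_le_one_of_norm_sub_le_one hq (hx.trans hs)) hxT

theorem isFixedPt_of_isPeriodicPt_of_norm_eval_sub_le_on_closedBall {p : ℕ} (hp : p.Prime)
    (hp0 : 0 < ‖(p : K)‖) (hpK : ‖(p : K)‖ < 1) {h : K[X]} (hh : h.supNorm ≤ 1) {q : K}
    (hq : ‖q‖ ≤ 1) {s : ℝ} (hs : s ≤ 1) {M : ℕ} (hM : ‖(p : K)‖ ^ M ≤ s)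
    (hdisp : ∀ x, ‖x - q‖ ≤ s → ‖h.eval x - x‖ ≤ ‖(p : K)‖ ^ (M + 4)) {ξ : K}
    (hξ : ‖ξ - q‖ ≤ s) {n : ℕ} (hn : 0 < n) (hper : IsPeriodicPt (fun x => h.eval x) n ξ) :
    IsFixedPt (fun x => h.eval x) ξ := by
  set π : K := (p : K) ^ (M + 2)
  have hπ : ‖π‖ = ‖(p : K)‖ ^ (M + 2) := norm_pow _ _
  have hdisp' : ∀ x, ‖x - q‖ ≤ s → ‖h.eval x - x‖ ≤ ‖π‖ * ‖(p : K)‖ ^ 2 := by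
    rw [hπ, ← pow_add]
    exact hdisp
  have hπs : ‖π + ξ - q‖ ≤ s := by
    rw [add_sub_assoc]
    refine (IsUltrametricDist.norm_add_le_max _ _).trans (max_le ?_ hξ)
    exact hπ ▸ (pow_le_pow_of_le_one hp0.le hpK.le (by omega)).trans hM
  exact isFixedPt_of_isPeriodicPt_of_norm_eval_sub_le hp hpK hh
    (IsUltrametricDist.norm_le_one_of_norm_sub_le_one hq (hξ.trans hs)) (pow_ne_zero _ (norm_pos_iff.1 hp0))
    (pow_lt_self_of_lt_one₀ hp0 hpK one_lt_two)
    (hπ ▸ pow_le_pow_of_le_one hp0.le hpK.le (by omega)) (hdisp' ξ hξ) (hdisp' _ hπs) hn hper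

end Polynomial

theorem stmt8_general {K : Type*} [NormedField K] [IsUltrametricDist K]
    [IsAlgClosed K]
    (p : ℕ) (hp : p.Prime) (hpK : ‖(p : K)‖ = (p : ℝ)⁻¹)
    (f : K[X]) (d : ℕ) (hd : 2 ≤ d) (hdeg : f.natDegree = d)
    (hcoeff : ∀ i, ‖f.coeff i‖ ≤ 1) (hlead : ‖f.leadingCoeff‖ = 1)
    (q : K) (hq : ‖q‖ ≤ 1) (s : ℝ) (hs0 : 0 < s) (hs1 : s < 1) :
    {ξ : K | ξ ∈ Function.periodicPts (fun x => f.eval x) ∧ ‖ξ - q‖ ≤ s}.Finite := by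
  have hp0 : 0 < ‖(p : K)‖ := by rw [hpK]; exact inv_pos.2 (Nat.cast_pos.2 hp.pos)
  have hp1 : ‖(p : K)‖ < 1 := by rw [hpK]; exact inv_lt_one_of_one_lt₀ (Nat.one_lt_cast.2 hp.one_lt)
  have hf : HasGoodReduction f := ⟨supNorm_le_iff.2 hcoeff, hlead⟩
  have hd' : 1 < f.natDegree := by omega
  obtain ⟨M, hM⟩ := exists_pow_lt_of_lt_one hs0 hp1
  obtain ⟨C, hC⟩ := exists_pow_lt_of_lt_one (pow_pos hp0 (M + 4)) hs1
  by_contra hinf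
  obtain ⟨T, hTS, rfl⟩ := Set.Infinite.exists_subset_card_eq hinf C
  obtain ⟨m, hm, hdisp⟩ := hf.exists_iterate_norm_eval_sub_le hd' hq hs1.le fun η hη => hTS hη
  refine hinf ((finite_setOfPred_isRoot (hf.iterate_comp_sub_X hd' hm).ne_zero).subset ?_)
  rintro ξ ⟨hξ, hξq⟩
  obtain ⟨n, hn, hξn⟩ := mem_periodicPts.1 hξ
  have hfix := isFixedPt_of_isPeriodicPt_of_norm_eval_sub_le_on_closedBall hp hp0 hp1
    (hf.iterate_comp (by omega) m).1 hq hs1.le hM.le (fun x hx => (hdisp x hx).trans hC.le) hξq hn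
    (eval_iterate_comp_X f m ▸ hξn.iterate m)
  simpa [sub_eq_zero] using hfix.eq

/-- for a good-reduction polynomial `f` of degree `d ≥ 2`, `q` integral and
`0 < s < 1`, only finitely many periodic points `ξ` of `f` satisfy `‖ξ - q‖ ≤ s`. -/
theorem stmt8 {K : Type*} [NormedField K] [IsUltrametricDist K] [CompleteSpace K]
    [IsAlgClosed K] [CharZero K]
    (p : ℕ) (hp : p.Prime) (hpK : ‖(p : K)‖ = (p : ℝ)⁻¹)
    (f : K[X]) (d : ℕ) (hd : 2 ≤ d) (hdeg : f.natDegree = d)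
    (hcoeff : ∀ i, ‖f.coeff i‖ ≤ 1) (hlead : ‖f.leadingCoeff‖ = 1)
    (q : K) (hq : ‖q‖ ≤ 1) (s : ℝ) (hs0 : 0 < s) (hs1 : s < 1) :
    {ξ : K | ξ ∈ Function.periodicPts (fun x => f.eval x) ∧ ‖ξ - q‖ ≤ s}.Finite :=
  stmt8_general p hp hpK f d hd hdeg hcoeff hlead q hq s hs0 hs1
end

section
/- Let d ≥ 2 be an integer and z ∈ ℂ with |z| ≥ 1, and set q = (z + z⁻¹)/2. Then (1/dⁿ)·log⁺|T_d⁽ⁿ⁾(q)| converges to log|z| as n → ∞, where T_d⁽ⁿ⁾ denotes the n-th iterate of T_d and log⁺ x = max{0, log x}. -/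
/-!
Since `T_d ∘ T_e = T_{de}` and `T_k((w + w⁻¹)/2) = (wᵏ + w⁻ᵏ)/2`, the `n`-th iterate
sends `q = (z + z⁻¹)/2` to `(w + w⁻¹)/2` with `w = z^(dⁿ)`. For `|w| ≥ 1` the quantity
`log⁺|(w + w⁻¹)/2|` differs from `log|w| = dⁿ log|z|` by at most `log 4`, and this bounded
error disappears after dividing by `dⁿ → ∞`.
-/

open Polynomial Filter

namespace Polynomial.Chebyshev

variable {R : Type*} [CommRing R]

theorem T_eval_iterate (d n : ℕ) (x : R) :
    (fun x => (T R d).eval x)^[n] x = (T R (d ^ n : ℕ)).eval x := by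
  induction n with
  | zero => simp
  | succ n ih =>
    rw [Function.iterate_succ_apply', ih, ← eval_comp, ← T_mul, pow_succ', Nat.cast_mul]

theorem two_mul_T_eval_of_two_mul_eq_add {x y u : R} (hxy : x * y = 1) (hu : 2 * u = x + y)
    (n : ℕ) : 2 * (T R n).eval u = x ^ n + y ^ n := by
  have h := congrArg (eval u) (C_comp_two_mul_X R n)
  rw [eval_comp, eval_mul, eval_ofNat, eval_X, hu, ← dickson_one_one_eq_chebyshev_C,
    dickson_one_one_eval_add_inv x y hxy, eval_mul, eval_ofNat] at h
  exact h.symm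

theorem T_eval_half_add_inv {K : Type*} [Field K] (h2 : (2 : K) ≠ 0) {w : K} (hw : w ≠ 0)
    (n : ℕ) : (T K n).eval ((w + w⁻¹) / 2) = (w ^ n + w⁻¹ ^ n) / 2 := by
  rw [eq_div_iff h2, mul_comm]
  exact two_mul_T_eval_of_two_mul_eq_add (mul_inv_cancel₀ hw) (mul_div_cancel₀ _ h2) n

end Polynomial.Chebyshev

theorem abs_posLog_norm_half_add_inv_sub_log_le {w : ℂ} (hw : 1 ≤ ‖w‖) :
    |Real.posLog ‖(w + w⁻¹) / 2‖ - Real.log ‖w‖| ≤ Real.log 4 := by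
  have hw0 : 0 < ‖w‖ := one_pos.trans_le hw
  have hinv : ‖w⁻¹‖ ≤ 1 := by rw [norm_inv]; exact inv_le_one_of_one_le₀ hw
  have hlog4 : 0 < Real.log 4 := Real.log_pos (by norm_num)
  have upper : Real.posLog ‖(w + w⁻¹) / 2‖ ≤ Real.log ‖w‖ := by
    have hle : ‖(w + w⁻¹) / 2‖ ≤ ‖w‖ := by
      rw [norm_div, Complex.norm_two, div_le_iff₀ two_pos]
      linarith [norm_add_le w w⁻¹]
    calc Real.posLog ‖(w + w⁻¹) / 2‖ ≤ Real.posLog ‖w‖ :=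
          Real.posLog_le_posLog (norm_nonneg _) hle
      _ = Real.log ‖w‖ := Real.posLog_eq_log (by rwa [abs_norm])
  have lower : Real.log ‖w‖ - Real.log 4 ≤ Real.posLog ‖(w + w⁻¹) / 2‖ := by
    rcases le_or_gt ‖w‖ 4 with hsmall | hbig
    · linarith [Real.log_le_log hw0 hsmall, Real.posLog_nonneg (x := ‖(w + w⁻¹) / 2‖)]
    · have hge : ‖w‖ / 4 ≤ ‖(w + w⁻¹) / 2‖ := by
        rw [norm_div, Complex.norm_two]
        linarith [norm_sub_le_norm_add w w⁻¹]
      calc Real.log ‖w‖ - Real.log 4 = Real.log (‖w‖ / 4) :=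
            (Real.log_div hw0.ne' (by norm_num)).symm
        _ ≤ Real.log ‖(w + w⁻¹) / 2‖ := Real.log_le_log (by positivity) hge
        _ ≤ Real.posLog ‖(w + w⁻¹) / 2‖ := le_max_right _ _
  rw [abs_le]
  constructor <;> linarith

theorem tendsto_one_div_mul_of_abs_sub_mul_le {N b : ℕ → ℝ} {c C : ℝ}
    (hN : Tendsto N atTop atTop) (hb : ∀ n, |b n - N n * c| ≤ C) :
    Tendsto (fun n => 1 / N n * b n) atTop (nhds c) := by
  rw [← tendsto_sub_nhds_zero_iff]
  refine squeeze_zero_norm' ?_ ((tendsto_const_nhds (x := C)).div_atTop hN)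
  filter_upwards [hN.eventually_gt_atTop 0] with n hn
  rw [Real.norm_eq_abs, show 1 / N n * b n - c = (b n - N n * c) / N n by field_simp, abs_div,
    abs_of_pos hn]
  exact div_le_div_of_nonneg_right (hb n) hn.le

/-- for `d ≥ 2`, `|z| ≥ 1` and `q = (z + z⁻¹)/2`, the quantity
`(1/dⁿ)·log⁺|T_d⁽ⁿ⁾(q)|` converges to `log|z|` as `n → ∞`. -/
theorem stmt12 (d : ℕ) (hd : 2 ≤ d) (z : ℂ) (hz : 1 ≤ ‖z‖)
    (q : ℂ) (hq : q = (z + z⁻¹) / 2) :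
    Tendsto (fun n : ℕ =>
        (1 / (d : ℝ) ^ n) *
          max 0 (Real.log ‖
            ((fun x => (Polynomial.Chebyshev.T ℂ d).eval x)^[n] q)‖))
      atTop (nhds (Real.log ‖z‖)) := by
  have hz0 : z ≠ 0 := norm_pos_iff.mp (one_pos.trans_le hz)
  have hdn : Tendsto (fun n : ℕ => (d : ℝ) ^ n) atTop atTop :=
    tendsto_pow_atTop_atTop_of_one_lt (by exact_mod_cast hd)
  refine tendsto_one_div_mul_of_abs_sub_mul_le hdn (C := Real.log 4) fun n => ?_
  have hw : 1 ≤ ‖z ^ d ^ n‖ := by rw [norm_pow]; exact one_le_pow₀ hz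
  have key := abs_posLog_norm_half_add_inv_sub_log_le hw
  rwa [← inv_pow, ← Chebyshev.T_eval_half_add_inv two_ne_zero hz0, ← Chebyshev.T_eval_iterate,
    ← hq, norm_pow, Real.log_pow, Nat.cast_pow] at key
end

section
/- Let z ∈ ℂ with |z| ≥ 1 and set q = (z + z⁻¹)/2. Then (1/2π)·∫₀^{2π} log|cos θ − q| dθ = log|z| − log 2. -/
/-!
Put `w = e^{iθ}`. Then `cos θ = (w + w⁻¹)/2` and `cos θ - q = (w - z)(w - z⁻¹)/(2w)`,
so away from finitely many points
`log |cos θ - q| = log |w - z| + log |w - z⁻¹| - log |w| - log 2`.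
By Jensen, the average of `log |w - a|` over the unit circle is `log⁺ |a|`; for `|z| ≥ 1`
this is `log |z|` at `a = z` and `0` at `a = z⁻¹` and `a = 0`.
-/

open Real

lemma joukowski_sub_joukowski {w z : ℂ} (hw : w ≠ 0) (hz : z ≠ 0) :
    (w + w⁻¹) / 2 - (z + z⁻¹) / 2 = (w - z) * (w - z⁻¹) / (2 * w) := by
  field_simp
  ring

lemma log_norm_joukowski_sub_joukowski {w z : ℂ} (hw : w ≠ 0) (hz : z ≠ 0) (hwz : w ≠ z)
    (hwz' : w ≠ z⁻¹) :
    log ‖(w + w⁻¹) / 2 - (z + z⁻¹) / 2‖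
      = log ‖w - z‖ + log ‖w - z⁻¹‖ - log ‖w - 0‖ - log 2 := by
  have h₀ : ‖w‖ ≠ 0 := norm_ne_zero_iff.2 hw
  have h₁ : ‖w - z‖ ≠ 0 := norm_ne_zero_iff.2 (sub_ne_zero.2 hwz)
  have h₂ : ‖w - z⁻¹‖ ≠ 0 := norm_ne_zero_iff.2 (sub_ne_zero.2 hwz')
  rw [joukowski_sub_joukowski hw hz, norm_div, norm_mul, norm_mul, Complex.norm_two, sub_zero,
    log_div (mul_ne_zero h₁ h₂) (mul_ne_zero two_ne_zero h₀), log_mul h₁ h₂,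
    log_mul two_ne_zero h₀]
  ring

theorem circleAverage_log_norm_joukowski_sub {z : ℂ} (hz : z ≠ 0) :
    circleAverage (fun w ↦ log ‖(w + w⁻¹) / 2 - (z + z⁻¹) / 2‖) 0 1
      = log⁺ ‖z‖ + log⁺ ‖z⁻¹‖ - log 2 := by
  have hfin : ({0, z, z⁻¹} : Set ℂ).Finite := by simp
  calc circleAverage (fun w ↦ log ‖(w + w⁻¹) / 2 - (z + z⁻¹) / 2‖) 0 1
      = circleAverage
          (fun w ↦ log ‖w - z‖ + log ‖w - z⁻¹‖ - log ‖w - 0‖ - log 2) 0 1 := by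
        refine circleAverage_congr_codiscreteWithin ?_ one_ne_zero
        filter_upwards [compl_finite_mem_codiscreteWithin hfin] with w hw
        simp only [Set.mem_compl_iff, Set.mem_insert_iff, Set.mem_singleton_iff, not_or] at hw
        exact log_norm_joukowski_sub_joukowski hw.1 hz hw.2.1 hw.2.2
    _ = log⁺ ‖z‖ + log⁺ ‖z⁻¹‖ - log 2 := by
        rw [circleAverage_fun_sub, circleAverage_fun_sub, circleAverage_fun_add]
        · rw [circleAverage_log_norm_sub_const_eq_posLog,
            circleAverage_log_norm_sub_const_eq_posLog,
            circleAverage_log_norm_sub_const_eq_posLog, circleAverage_const, norm_zero,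
            posLog_zero, sub_zero]
        all_goals fun_prop

lemma circleMap_zero_one_add_inv_div_two (θ : ℝ) :
    (circleMap 0 1 θ + (circleMap 0 1 θ)⁻¹) / 2 = Real.cos θ := by
  rw [circleMap_zero, Complex.ofReal_one, one_mul, ← Complex.exp_neg, Complex.ofReal_cos,
    Complex.cos, neg_mul]

/-- for `|z| ≥ 1` and `q = (z + z⁻¹)/2`,
`(1/2π)·∫₀^{2π} log|cos θ - q| dθ = log|z| - log 2`. -/
theorem stmt13 (z : ℂ) (hz : 1 ≤ ‖z‖) (q : ℂ) (hq : q = (z + z⁻¹) / 2) :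
    (1 / (2 * Real.pi)) *
        ∫ θ in (0 : ℝ)..(2 * Real.pi), Real.log ‖(Real.cos θ : ℂ) - q‖ =
      Real.log ‖z‖ - Real.log 2 := by
  have hz0 : z ≠ 0 := norm_pos_iff.mp (one_pos.trans_le hz)
  calc (1 / (2 * π)) * ∫ θ in (0 : ℝ)..(2 * π), log ‖(cos θ : ℂ) - q‖
      = circleAverage (fun w ↦ log ‖(w + w⁻¹) / 2 - q‖) 0 1 := by
        simp only [circleAverage_def, circleMap_zero_one_add_inv_div_two, one_div, smul_eq_mul]
    _ = log⁺ ‖z‖ + log⁺ ‖z⁻¹‖ - log 2 := by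
        rw [hq, circleAverage_log_norm_joukowski_sub hz0]
    _ = log ‖z‖ - log 2 := by
        have hzinv : |‖z⁻¹‖| ≤ 1 := by
          rw [abs_norm, norm_inv]
          exact inv_le_one_of_one_le₀ hz
        rw [posLog_eq_log (by rwa [abs_norm]), (posLog_eq_zero_iff _).2 hzinv, add_zero]
end

section
/- Let g, h ∈ 𝒪[X] and let f(X) = g(Xᵖ) + p·h(X) be monic of degree d ≥ 2 with coefficients in 𝒪. Then any two distinct periodic points ζ ≠ ξ of f satisfy |ζ − ξ| = 1. -/
/-!
A monic `f` with coefficients in `𝒪` satisfies `‖f x‖ = ‖x‖ ^ d > ‖x‖` when `‖x‖ > 1`, so its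
periodic points lie in `𝒪`. On `𝒪`, `x - y` divides `q x - q y` for every `q ∈ 𝒪[X]`, and
`x ^ p - y ^ p ≡ (x - y) ^ p` modulo `p (x - y)`; for `f = g(Xᵖ) + p h` this gives
`‖f x - f y‖ ≤ max (|p| ‖x - y‖) (‖x - y‖ ^ p)`. Hence `f` is `1`-Lipschitz on `𝒪` and strictly
shrinks distances in `(0, 1)`. A `1`-Lipschitz self-map preserves the distance between two of its
periodic points (a common period brings both back), so `‖ζ - ξ‖` cannot lie in `(0, 1)`.
-/

open Polynomial Function Set

section Dynamics

variable {α : Type*}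

theorem Function.notMem_periodicPts_of_mapsTo_of_lt {β : Type*} [Preorder β] {f : α → α}
    {s : Set α} {u : α → β} (hs : MapsTo f s s) (hu : ∀ x ∈ s, u x < u (f x)) {x : α}
    (hx : x ∈ s) : x ∉ periodicPts f := by
  rintro ⟨n, hn, hper⟩
  have hmono : StrictMono fun k => u (f^[k] x) := strictMono_nat_of_lt_succ fun k => by
    simpa only [iterate_succ_apply'] using hu _ (hs.iterate k hx)
  simpa only [iterate_zero_apply, hper.eq, lt_self_iff_false] using hmono hn

variable [PseudoMetricSpace α] {f : α → α} {s : Set α}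

theorem LipschitzOnWith.dist_iterate_le (hf : LipschitzOnWith 1 f s) (hs : MapsTo f s s)
    (n : ℕ) {x y : α} (hx : x ∈ s) (hy : y ∈ s) : dist (f^[n] x) (f^[n] y) ≤ dist x y := by
  induction n generalizing x y with
  | zero => rfl
  | succ n ih =>
    rw [iterate_succ_apply, iterate_succ_apply]
    exact (ih (hs hx) (hs hy)).trans (by simpa using hf.dist_le_mul x hx y hy)

theorem LipschitzOnWith.dist_apply_eq_of_mem_periodicPts (hf : LipschitzOnWith 1 f s)
    (hs : MapsTo f s s) {x y : α} (hxs : x ∈ s) (hys : y ∈ s) (hx : x ∈ periodicPts f)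
    (hy : y ∈ periodicPts f) : dist (f x) (f y) = dist x y := by
  obtain ⟨m, hm, hxm⟩ := hx
  obtain ⟨n, hn, hyn⟩ := hy
  obtain ⟨k, hk⟩ : ∃ k, m * n = k + 1 := Nat.exists_eq_add_one.mpr (Nat.mul_pos hm hn)
  refine le_antisymm (by simpa using hf.dist_le_mul x hxs y hys) ?_
  calc dist x y = dist (f^[k + 1] x) (f^[k + 1] y) := by
        rw [← hk, (hxm.mul_const n).eq, (hyn.const_mul m).eq]
    _ ≤ dist (f x) (f y) := hf.dist_iterate_le hs k (hs hxs) (hs hys)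

end Dynamics

namespace Subring

variable (R : Type*) [NormedCommRing R] [NormOneClass R] [IsUltrametricDist R]

def unitClosedBall : Subring R where
  carrier := {x | ‖x‖ ≤ 1}
  mul_mem' {x y} hx hy := (norm_mul_le x y).trans (mul_le_one₀ hx (norm_nonneg y) hy)
  one_mem' := norm_one.le
  add_mem' {x y} hx hy := (IsUltrametricDist.norm_add_le_max x y).trans (max_le hx hy)
  zero_mem' := norm_zero.trans_le zero_le_one
  neg_mem' {x} hx := (norm_neg x).trans_le hx

variable {R}

theorem norm_le_of_dvd_unitClosedBall {a b : unitClosedBall R} (h : a ∣ b) :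
    ‖(b : R)‖ ≤ ‖(a : R)‖ := by
  obtain ⟨c, rfl⟩ := h
  exact (norm_mul_le _ _).trans (mul_le_of_le_one_right (norm_nonneg _) c.2)

end Subring

namespace Polynomial

open Subring

variable {R : Type*} [NormedCommRing R] [NormOneClass R] [IsUltrametricDist R]

theorem eval_coe_map_subtype (q : (unitClosedBall R)[X]) (x : unitClosedBall R) :
    (q.map (unitClosedBall R).subtype).eval (x : R) = q.eval x :=
  eval_map_apply (unitClosedBall R).subtype x

theorem exists_map_unitClosedBall_eq {q : R[X]} (hq : ∀ i, ‖q.coeff i‖ ≤ 1) :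
    ∃ q' : (unitClosedBall R)[X], q'.map (unitClosedBall R).subtype = q :=
  (mem_lifts q).mp ((lifts_iff_coeff_lifts q).mpr fun n => ⟨⟨_, hq n⟩, rfl⟩)

theorem norm_eval_le_one {q : R[X]} (hq : ∀ i, ‖q.coeff i‖ ≤ 1) {x : R} (hx : ‖x‖ ≤ 1) :
    ‖q.eval x‖ ≤ 1 := by
  obtain ⟨q, rfl⟩ := exists_map_unitClosedBall_eq hq
  lift x to unitClosedBall R using hx
  exact eval_coe_map_subtype q x ▸ (q.eval x).2

theorem norm_eval_sub_eval_le_s17 {q : R[X]} (hq : ∀ i, ‖q.coeff i‖ ≤ 1) {x y : R}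
    (hx : ‖x‖ ≤ 1) (hy : ‖y‖ ≤ 1) : ‖q.eval x - q.eval y‖ ≤ ‖x - y‖ := by
  obtain ⟨q, rfl⟩ := exists_map_unitClosedBall_eq hq
  lift x to unitClosedBall R using hx
  lift y to unitClosedBall R using hy
  simpa only [eval_coe_map_subtype, AddSubgroupClass.coe_sub] using
    norm_le_of_dvd_unitClosedBall (sub_dvd_eval_sub x y q)

theorem norm_pow_sub_pow_le {p : ℕ} (hp : p.Prime) {x y : R} (hx : ‖x‖ ≤ 1) (hy : ‖y‖ ≤ 1) :
    ‖x ^ p - y ^ p‖ ≤ max (‖(p : R)‖ * ‖x - y‖) (‖x - y‖ ^ p) := by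
  lift x to unitClosedBall R using hx
  lift y to unitClosedBall R using hy
  -- Taken in `𝒪`, the cofactor `r` has norm at most `1`.
  obtain ⟨r, hr⟩ := exists_add_pow_prime_eq hp y (x - y)
  rw [add_sub_cancel] at hr
  have hr' := congrArg Subtype.val hr
  push_cast at hr'
  have hsplit : (x : R) ^ p - (y : R) ^ p = p * y * (x - y) * r + (x - y) ^ p := by
    rw [hr']
    ring
  rw [hsplit]
  refine (IsUltrametricDist.norm_add_le_max _ _).trans (max_le_max ?_ (norm_pow_le' _ hp.pos))
  calc ‖(p : R) * y * (x - y) * r‖ ≤ ‖(p : R)‖ * ‖(y : R)‖ * ‖(x - y : R)‖ * ‖(r : R)‖ := by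
        refine (norm_mul_le _ _).trans (mul_le_mul_of_nonneg_right ?_ (norm_nonneg _))
        exact (norm_mul_le _ _).trans (mul_le_mul_of_nonneg_right (norm_mul_le _ _) (norm_nonneg _))
    _ ≤ ‖(p : R)‖ * 1 * ‖(x - y : R)‖ * 1 := by gcongr; exacts [y.2, r.2]
    _ = ‖(p : R)‖ * ‖(x : R) - y‖ := by ring

theorem norm_coeff_le_one_of_eq_comp_X_pow_add (p : ℕ) {g h f : R[X]}
    (hg : ∀ i, ‖g.coeff i‖ ≤ 1) (hh : ∀ i, ‖h.coeff i‖ ≤ 1)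
    (hf : f = g.comp (X ^ p) + (p : R[X]) * h) (i : ℕ) : ‖f.coeff i‖ ≤ 1 := by
  obtain ⟨g, rfl⟩ := exists_map_unitClosedBall_eq hg
  obtain ⟨h, rfl⟩ := exists_map_unitClosedBall_eq hh
  set f' : (unitClosedBall R)[X] := g.comp (X ^ p) + (p : (unitClosedBall R)[X]) * h
  have hmap : f = f'.map (unitClosedBall R).subtype := by
    simp [f', hf, map_comp]
  rw [hmap, coeff_map]
  exact (f'.coeff i).2

theorem norm_eval_sub_eval_le_max_of_eq_comp_X_pow_add {p : ℕ} (hp : p.Prime) {g h f : R[X]}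
    (hg : ∀ i, ‖g.coeff i‖ ≤ 1) (hh : ∀ i, ‖h.coeff i‖ ≤ 1)
    (hf : f = g.comp (X ^ p) + (p : R[X]) * h) {x y : R} (hx : ‖x‖ ≤ 1) (hy : ‖y‖ ≤ 1) :
    ‖f.eval x - f.eval y‖ ≤ max (‖(p : R)‖ * ‖x - y‖) (‖x - y‖ ^ p) := by
  have hsplit : f.eval x - f.eval y
      = (g.eval (x ^ p) - g.eval (y ^ p)) + p * (h.eval x - h.eval y) := by
    simp only [hf, eval_add, eval_comp, eval_pow, eval_X, eval_mul, eval_natCast]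
    ring
  have hpow (z : R) (hz : ‖z‖ ≤ 1) : ‖z ^ p‖ ≤ 1 :=
    (norm_pow_le' z hp.pos).trans (pow_le_one₀ (norm_nonneg z) hz)
  rw [hsplit]
  refine (IsUltrametricDist.norm_add_le_max _ _).trans (max_le ?_ ?_)
  · exact (norm_eval_sub_eval_le_s17 hg (hpow x hx) (hpow y hy)).trans (norm_pow_sub_pow_le hp hx hy)
  · refine le_max_of_le_left ((norm_mul_le _ _).trans ?_)
    gcongr
    exact norm_eval_sub_eval_le_s17 hh hx hy

theorem norm_eval_sub_eval_le_of_eq_comp_X_pow_add {p : ℕ} (hp : p.Prime) {g h f : R[X]}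
    (hg : ∀ i, ‖g.coeff i‖ ≤ 1) (hh : ∀ i, ‖h.coeff i‖ ≤ 1)
    (hf : f = g.comp (X ^ p) + (p : R[X]) * h) {x y : R} (hx : ‖x‖ ≤ 1) (hy : ‖y‖ ≤ 1) :
    ‖f.eval x - f.eval y‖ ≤ ‖x - y‖ := by
  have hxy : ‖x - y‖ ≤ 1 := (unitClosedBall R).sub_mem hx hy
  refine (norm_eval_sub_eval_le_max_of_eq_comp_X_pow_add hp hg hh hf hx hy).trans (max_le ?_ ?_)
  · exact mul_le_of_le_one_left (norm_nonneg _) (IsUltrametricDist.norm_natCast_le_one R p)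
  · exact pow_le_of_le_one (norm_nonneg _) hxy hp.ne_zero

theorem norm_eval_sub_eval_lt_of_eq_comp_X_pow_add {p : ℕ} (hp : p.Prime) (hpR : ‖(p : R)‖ < 1)
    {g h f : R[X]} (hg : ∀ i, ‖g.coeff i‖ ≤ 1) (hh : ∀ i, ‖h.coeff i‖ ≤ 1)
    (hf : f = g.comp (X ^ p) + (p : R[X]) * h) {x y : R} (hx : ‖x‖ ≤ 1) (hy : ‖y‖ ≤ 1)
    (hne : x ≠ y) (hlt : ‖x - y‖ < 1) : ‖f.eval x - f.eval y‖ < ‖x - y‖ := by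
  have hpos : 0 < ‖x - y‖ := norm_pos_iff.mpr (sub_ne_zero.mpr hne)
  refine (norm_eval_sub_eval_le_max_of_eq_comp_X_pow_add hp hg hh hf hx hy).trans_lt
    (max_lt ?_ ?_)
  · exact mul_lt_of_lt_one_left hpos hpR
  · exact pow_lt_self_of_lt_one₀ hpos hlt hp.one_lt

end Polynomial

namespace Polynomial.Monic

variable {K : Type*} [NormedField K] [IsUltrametricDist K]

theorem norm_eval_eq_pow_natDegree {f : K[X]} (hf : f.Monic)
    (hcoeff : ∀ i, ‖f.coeff i‖ ≤ 1) {x : K} (hx : 1 < ‖x‖) :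
    ‖f.eval x‖ = ‖x‖ ^ f.natDegree := by
  have hsum : ‖∑ i ∈ Finset.range f.natDegree, f.coeff i * x ^ i‖ < ‖x ^ f.natDegree‖ := by
    rcases (Finset.range f.natDegree).eq_empty_or_nonempty with hempty | hne
    · simpa [hempty] using pow_pos (one_pos.trans hx) _
    obtain ⟨i, hi, hle⟩ := IsUltrametricDist.exists_norm_finsetSum_le_of_nonempty hne
      fun i => f.coeff i * x ^ i
    refine hle.trans_lt ?_
    rw [norm_mul, norm_pow, norm_pow]
    calc ‖f.coeff i‖ * ‖x‖ ^ i ≤ ‖x‖ ^ i := mul_le_of_le_one_left (by positivity) (hcoeff i)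
      _ < ‖x‖ ^ f.natDegree := pow_lt_pow_right₀ hx (Finset.mem_range.mp hi)
  rw [eval_eq_sum_range, Finset.sum_range_succ, hf.coeff_natDegree, one_mul,
    IsUltrametricDist.norm_add_eq_max_of_norm_ne_norm hsum.ne, max_eq_right hsum.le, norm_pow]

theorem norm_le_one_of_mem_periodicPts {f : K[X]} (hf : f.Monic)
    (hcoeff : ∀ i, ‖f.coeff i‖ ≤ 1) (hdeg : 1 < f.natDegree) {x : K}
    (hx : x ∈ periodicPts fun y => f.eval y) : ‖x‖ ≤ 1 := by
  by_contra! h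
  have hgrow : ∀ y ∈ {y : K | 1 < ‖y‖}, ‖y‖ < ‖f.eval y‖ := fun y hy => by
    rw [hf.norm_eval_eq_pow_natDegree hcoeff hy]
    exact lt_self_pow₀ hy hdeg
  exact notMem_periodicPts_of_mapsTo_of_lt (fun y hy => hy.trans (hgrow y hy)) hgrow h hx

end Polynomial.Monic

open Subring in
theorem stmt17_general {K : Type*} [NormedField K] [IsUltrametricDist K]
    (p : ℕ) (hp : p.Prime) (hpK : ‖(p : K)‖ = (p : ℝ)⁻¹)
    (g h : K[X]) (hg : ∀ i, ‖g.coeff i‖ ≤ 1) (hh : ∀ i, ‖h.coeff i‖ ≤ 1)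
    (f : K[X]) (hf : f = g.comp (X ^ p) + (p : K[X]) * h)
    (hmonic : f.Monic) (d : ℕ) (hd : 2 ≤ d) (hdeg : f.natDegree = d)
    (ζ ξ : K) (hζ : ζ ∈ Function.periodicPts (fun x => f.eval x))
    (hξ : ξ ∈ Function.periodicPts (fun x => f.eval x)) (hne : ζ ≠ ξ) :
    ‖ζ - ξ‖ = 1 := by
  have hcoeff : ∀ i, ‖f.coeff i‖ ≤ 1 := norm_coeff_le_one_of_eq_comp_X_pow_add p hg hh hf
  have hball : ∀ x ∈ periodicPts fun x => f.eval x, x ∈ unitClosedBall K :=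
    fun x hx => hmonic.norm_le_one_of_mem_periodicPts hcoeff (hdeg ▸ hd) hx
  have hmaps : MapsTo (fun x => f.eval x) (unitClosedBall K) (unitClosedBall K) :=
    fun x hx => norm_eval_le_one hcoeff hx
  have hlip : LipschitzOnWith 1 (fun x => f.eval x) (unitClosedBall K) :=
    LipschitzOnWith.mk_one fun x hx y hy => by
      simpa only [dist_eq_norm] using norm_eval_sub_eval_le_of_eq_comp_X_pow_add hp hg hh hf hx hy
  have hζ1 := hball ζ hζ
  have hξ1 := hball ξ hξ
  have hiso := hlip.dist_apply_eq_of_mem_periodicPts hmaps hζ1 hξ1 hζ hξ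
  rw [dist_eq_norm, dist_eq_norm] at hiso
  have hpK1 : ‖(p : K)‖ < 1 := hpK ▸ inv_lt_one_of_one_lt₀ (by exact_mod_cast hp.one_lt)
  refine le_antisymm ((unitClosedBall K).sub_mem hζ1 hξ1) ?_
  by_contra! hlt
  exact (norm_eval_sub_eval_lt_of_eq_comp_X_pow_add hp hpK1 hg hh hf hζ1 hξ1 hne hlt).ne hiso

/-- if `f(X) = g(Xᵖ) + p·h(X)` is monic of degree `d ≥ 2` with `g, h`
having integral coefficients, then any two distinct periodic points `ζ ≠ ξ` of `f`
satisfy `‖ζ - ξ‖ = 1`. -/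
theorem stmt17 {K : Type*} [NormedField K] [IsUltrametricDist K] [CompleteSpace K]
    [IsAlgClosed K] [CharZero K]
    (p : ℕ) (hp : p.Prime) (hpK : ‖(p : K)‖ = (p : ℝ)⁻¹)
    (g h : K[X]) (hg : ∀ i, ‖g.coeff i‖ ≤ 1) (hh : ∀ i, ‖h.coeff i‖ ≤ 1)
    (f : K[X]) (hf : f = g.comp (X ^ p) + (p : K[X]) * h)
    (hmonic : f.Monic) (d : ℕ) (hd : 2 ≤ d) (hdeg : f.natDegree = d)
    (ζ ξ : K) (hζ : ζ ∈ Function.periodicPts (fun x => f.eval x))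
    (hξ : ξ ∈ Function.periodicPts (fun x => f.eval x)) (hne : ζ ≠ ξ) :
    ‖ζ - ξ‖ = 1 :=
  stmt17_general p hp hpK g h hg hh f hf hmonic d hd hdeg ζ ξ hζ hξ hne
end
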